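/- arXiv:2603.27963 — 7 statements merged into one kernel-verified Lean document; each statement's English description precedes it below -/
import Mathlib

section
/- Let (E,d) be a random metric space with base (Ω,𝓕,P) that is (ε,λ)-complete (i.e., complete under the metrizable uniformity with base U(ε,λ) = {(x,y) : P(d(x,y) < ε) > 1−λ}). Let α ∈ L⁰₊(𝓕) satisfy α < 1 almost surely, and let T : E → E satisfy d(T(x),T(y)) ≤ α·d(x,y) for all x,y ∈ E. Then T has a unique fixed point x* in E. -/
/-! Picard iteration. Off a null set, the distances along the orbit `sₙ = Tⁿ x₀` satisfy the
deterministic geometric bound `d(sₘ, sₙ) ≤ αᴺ d(s₀, s₁) / (1 - α)` for `m, n ≥ N`, whose right-hand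
side tends to `0` a.e., hence in probability; so the orbit is `(ε,λ)`-Cauchy and converges to
some `x`. Since `d(T sₙ, T x) ≤ d(sₙ, x)`, the shifted orbit converges to both `x` and `T x`, and
`(ε,λ)`-limits are unique because convergence in probability has a.e. convergent subsequences.
Uniqueness of the fixed point: `d(x, y) ≤ α d(x, y)` with `α < 1` forces `d(x, y) = 0`. -/

open MeasureTheory Filter Set

variable {Ω : Type*} [MeasurableSpace Ω]

/-- `(E,d)` is a random metric space with base `(Ω,𝓕,μ)`: `d x y` represents an element of
`L⁰₊(𝓕)` (nonnegative a.e.), equality/inequality of distances being understood a.e. -/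
structure IsRandomMetric (μ : Measure Ω) {E : Type*} (d : E → E → Ω → ℝ) : Prop where
  meas : ∀ x y, Measurable (d x y)
  nonneg : ∀ x y, ∀ᵐ ω ∂μ, 0 ≤ d x y ω
  eq_zero_iff : ∀ x y, (d x y =ᵐ[μ] 0) ↔ x = y
  symm : ∀ x y, d x y =ᵐ[μ] d y x
  triangle : ∀ x y z, ∀ᵐ ω ∂μ, d x z ω ≤ d x y ω + d y z ω

/-- Cauchy sequence for the `(ε,λ)`-uniformity with base
`U(ε,λ) = {(x,y) : μ (d(x,y) < ε) > 1 − λ}`. -/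
def ELCauchy (μ : Measure Ω) {E : Type*} (d : E → E → Ω → ℝ) (s : ℕ → E) : Prop :=
  ∀ ε : ℝ, 0 < ε → ∀ l : ℝ, 0 < l → l < 1 →
    ∃ N, ∀ m ≥ N, ∀ n ≥ N, μ {ω | d (s m) (s n) ω < ε} > ENNReal.ofReal (1 - l)

/-- Convergence for the `(ε,λ)`-uniformity (convergence in probability of distances). -/
def ELTendsto (μ : Measure Ω) {E : Type*} (d : E → E → Ω → ℝ) (s : ℕ → E) (x : E) : Prop :=
  ∀ ε : ℝ, 0 < ε → ∀ l : ℝ, 0 < l → l < 1 →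
    ∃ N, ∀ n ≥ N, μ {ω | d (s n) x ω < ε} > ENNReal.ofReal (1 - l)

/-- `(ε,λ)`-completeness: the metrizable `(ε,λ)`-uniformity is complete. -/
def ELComplete (μ : Measure Ω) {E : Type*} (d : E → E → Ω → ℝ) : Prop :=
  ∀ s : ℕ → E, ELCauchy μ d s → ∃ x, ELTendsto μ d s x

open Topology

theorem le_geom_of_step_le {a : ℝ} (ha0 : 0 ≤ a) (ha1 : a < 1) {D : ℕ → ℕ → ℝ}
    (hdiag : ∀ i, D i i = 0) (hsymm : ∀ i j, D i j = D j i)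
    (htri : ∀ i j k, D i k ≤ D i j + D j k)
    (hstep : ∀ n, D (n + 1) (n + 2) ≤ a * D n (n + 1))
    {N m n : ℕ} (hm : N ≤ m) (hn : N ≤ n) : D m n ≤ a ^ N * D 0 1 / (1 - a) := by
  wlog hmn : m ≤ n generalizing m n
  · rw [hsymm]; exact this hn hm (le_of_not_ge hmn)
  have h01 : 0 ≤ D 0 1 := by linarith [hdiag 0, htri 0 1 0, hsymm 0 1]
  have hsucc : ∀ k, D k (k + 1) ≤ a ^ k * D 0 1 := by
    intro k
    induction k with
    | zero => simp
    | succ k ih =>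
      calc D (k + 1) (k + 2) ≤ a * D k (k + 1) := hstep k
        _ ≤ a * (a ^ k * D 0 1) := mul_le_mul_of_nonneg_left ih ha0
        _ = a ^ (k + 1) * D 0 1 := by ring
  have hchain : ∀ k, m ≤ k → D m k ≤ ∑ i ∈ Finset.Ico m k, D i (i + 1) := by
    intro k hmk
    induction k, hmk using Nat.le_induction with
    | base => simp [hdiag]
    | succ k hmk ih =>
      rw [Finset.sum_Ico_succ_top hmk]
      exact (htri m k (k + 1)).trans (by gcongr)
  calc D m n ≤ ∑ k ∈ Finset.Ico m n, a ^ k * D 0 1 :=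
        (hchain n hmn).trans (Finset.sum_le_sum fun k _ => hsucc k)
    _ = (∑ k ∈ Finset.Ico m n, a ^ k) * D 0 1 := (Finset.sum_mul ..).symm
    _ ≤ a ^ m / (1 - a) * D 0 1 := by gcongr; exact geom_sum_Ico_le_of_lt_one ha0 ha1
    _ ≤ a ^ N / (1 - a) * D 0 1 := mul_le_mul_of_nonneg_right
        (div_le_div_of_nonneg_right (pow_le_pow_of_le_one ha0 ha1.le hm) (by linarith)) h01
    _ = a ^ N * D 0 1 / (1 - a) := by ring

theorem ofReal_one_sub_lt_iff_measure_compl_lt {μ : Measure Ω} [IsProbabilityMeasure μ]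
    {S : Set Ω} (hS : NullMeasurableSet S μ) {l : ℝ} (hl0 : 0 ≤ l) (hl1 : l ≤ 1) :
    ENNReal.ofReal (1 - l) < μ S ↔ μ Sᶜ < ENNReal.ofReal l := by
  rw [prob_compl_eq_one_sub₀ hS, ENNReal.ofReal_sub _ hl0, ENNReal.ofReal_one,
    ENNReal.sub_lt_iff_lt_right ENNReal.ofReal_ne_top (by simpa using hl1),
    ENNReal.sub_lt_iff_lt_right (measure_ne_top μ S) prob_le_one, add_comm]

section RandomMetric

variable {μ : Measure Ω} {E : Type*} {d : E → E → Ω → ℝ}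

theorem ELTendsto.comp_tendsto {s : ℕ → E} {x : E} (h : ELTendsto μ d s x) {ns : ℕ → ℕ}
    (hns : Tendsto ns atTop atTop) : ELTendsto μ d (s ∘ ns) x := by
  intro ε hε l hl0 hl1
  obtain ⟨N, hN⟩ := h ε hε l hl0 hl1
  obtain ⟨M, hM⟩ := tendsto_atTop_atTop.1 hns N
  exact ⟨M, fun n hn => hN (ns n) (hM n hn)⟩

theorem ELTendsto.of_ae_le {s t : ℕ → E} {x y : E} (h : ELTendsto μ d s x)
    (hle : ∀ n, ∀ᵐ ω ∂μ, d (t n) y ω ≤ d (s n) x ω) : ELTendsto μ d t y := by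
  intro ε hε l hl0 hl1
  obtain ⟨N, hN⟩ := h ε hε l hl0 hl1
  refine ⟨N, fun n hn => (hN n hn).trans_le (measure_mono_ae ?_)⟩
  filter_upwards [hle n] with ω hω hlt
  exact hω.trans_lt hlt

variable [IsProbabilityMeasure μ]

theorem elCauchy_of_ae_le {s : ℕ → E} {g : ℕ → Ω → ℝ}
    (hdm : ∀ m n, Measurable (d (s m) (s n))) (hgm : ∀ N, AEStronglyMeasurable (g N) μ)
    (hg : ∀ᵐ ω ∂μ, Tendsto (fun N => g N ω) atTop (𝓝 0))
    (hle : ∀ᵐ ω ∂μ, ∀ N m n, N ≤ m → N ≤ n → d (s m) (s n) ω ≤ g N ω) :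
    ELCauchy μ d s := by
  intro ε hε l hl0 hl1
  have hsmall := (tendstoInMeasure_iff_dist.1 (tendstoInMeasure_of_tendsto_ae (g := 0) hgm hg)
    ε hε).eventually_lt_const (ENNReal.ofReal_pos.2 hl0)
  obtain ⟨N, hN⟩ := eventually_atTop.1 hsmall
  refine ⟨N, fun m hm n hn => (ofReal_one_sub_lt_iff_measure_compl_lt
    (measurableSet_lt (hdm m n) measurable_const).nullMeasurableSet hl0.le hl1.le).2 ?_⟩
  refine (measure_mono_ae ?_).trans_lt (hN N le_rfl)
  filter_upwards [hle] with ω hω hlt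
  have hεd : ε ≤ d (s m) (s n) ω := not_lt.1 hlt
  simp only [Pi.zero_apply, Real.dist_eq, sub_zero]
  exact (hεd.trans (hω N m n hm hn)).trans (le_abs_self _)

theorem ELTendsto.exists_seq_tendsto_ae (hd : IsRandomMetric μ d) {s : ℕ → E} {x : E}
    (h : ELTendsto μ d s x) :
    ∃ ns : ℕ → ℕ, StrictMono ns ∧
      ∀ᵐ ω ∂μ, Tendsto (fun k => d (s (ns k)) x ω) atTop (𝓝 0) := by
  suffices TendstoInMeasure μ (fun n => d (s n) x) atTop 0 from this.exists_seq_tendsto_ae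
  rw [tendstoInMeasure_iff_dist]
  intro ε hε
  refine ENNReal.tendsto_nhds_zero.2 fun δ hδ => ?_
  obtain ⟨l, hl0, hl, hlδ⟩ := ENNReal.lt_iff_exists_real_btwn.1 (lt_min hδ zero_lt_one)
  have hl1 : l < 1 := by simpa using hlδ.trans_le (min_le_right _ _)
  obtain ⟨N, hN⟩ := h ε hε l (ENNReal.ofReal_pos.1 hl) hl1
  filter_upwards [eventually_ge_atTop N] with n hn
  have hS : NullMeasurableSet {ω | d (s n) x ω < ε} μ :=
    (measurableSet_lt (hd.meas (s n) x) measurable_const).nullMeasurableSet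
  calc μ {ω | ε ≤ dist (d (s n) x ω) 0} = μ {ω | d (s n) x ω < ε}ᶜ := by
        refine measure_congr (eventuallyEq_set.2 ?_)
        filter_upwards [hd.nonneg (s n) x] with ω hω
        simp [abs_of_nonneg hω]
    _ ≤ ENNReal.ofReal l :=
        ((ofReal_one_sub_lt_iff_measure_compl_lt hS hl0 hl1.le).1 (hN n hn)).le
    _ ≤ δ := hlδ.le.trans (min_le_left _ _)

theorem ELTendsto.unique (hd : IsRandomMetric μ d) {s : ℕ → E} {x y : E}
    (hx : ELTendsto μ d s x) (hy : ELTendsto μ d s y) : x = y := by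
  obtain ⟨ns, hns, hx'⟩ := hx.exists_seq_tendsto_ae hd
  obtain ⟨ns', hns', hy'⟩ := (hy.comp_tendsto hns.tendsto_atTop).exists_seq_tendsto_ae hd
  have htri : ∀ᵐ ω ∂μ, ∀ n, d x y ω ≤ d (s n) x ω + d (s n) y ω := by
    refine ae_all_iff.2 fun n => ?_
    filter_upwards [hd.triangle x (s n) y, hd.symm x (s n)] with ω h hs
    rwa [hs] at h
  refine (hd.eq_zero_iff x y).1 ?_
  filter_upwards [hx', hy', htri, hd.nonneg x y] with ω hx hy htri h0
  have hlim : Tendsto (fun k => d (s (ns (ns' k))) x ω + d (s (ns (ns' k))) y ω)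
      atTop (𝓝 0) := by
    simpa using (hx.comp hns'.tendsto_atTop).add hy
  exact le_antisymm (ge_of_tendsto' hlim fun k => htri _) h0

end RandomMetric

section Contraction

variable {μ : Measure Ω} {E : Type*} {d : E → E → Ω → ℝ} {α : Ω → ℝ} {T : E → E}

theorem ELTendsto.map_contraction (hd : IsRandomMetric μ d) (hα1 : ∀ᵐ ω ∂μ, α ω < 1)
    (hT : ∀ x y, ∀ᵐ ω ∂μ, d (T x) (T y) ω ≤ α ω * d x y ω) {s : ℕ → E} {x : E}
    (h : ELTendsto μ d s x) : ELTendsto μ d (T ∘ s) (T x) :=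
  h.of_ae_le fun n => by
    filter_upwards [hT (s n) x, hα1, hd.nonneg (s n) x] with ω hle h1 h0
    exact hle.trans (mul_le_of_le_one_left h0 h1.le)

theorem eq_of_fixed_of_contraction (hd : IsRandomMetric μ d) (hα1 : ∀ᵐ ω ∂μ, α ω < 1)
    (hT : ∀ x y, ∀ᵐ ω ∂μ, d (T x) (T y) ω ≤ α ω * d x y ω) {x y : E} (hx : T x = x)
    (hy : T y = y) : x = y := by
  refine (hd.eq_zero_iff x y).1 ?_
  filter_upwards [hT x y, hα1, hd.nonneg x y] with ω hle h1 h0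
  rw [hx, hy] at hle
  show d x y ω = 0
  nlinarith

theorem elCauchy_iterate_of_contraction [IsProbabilityMeasure μ] (hd : IsRandomMetric μ d)
    (hαm : Measurable α) (hα0 : ∀ᵐ ω ∂μ, 0 ≤ α ω) (hα1 : ∀ᵐ ω ∂μ, α ω < 1)
    (hT : ∀ x y, ∀ᵐ ω ∂μ, d (T x) (T y) ω ≤ α ω * d x y ω) (x₀ : E) :
    ELCauchy μ d (fun n => T^[n] x₀) := by
  set s : ℕ → E := fun n => T^[n] x₀
  have hstep : ∀ᵐ ω ∂μ, ∀ n, d (s (n + 1)) (s (n + 2)) ω ≤ α ω * d (s n) (s (n + 1)) ω :=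
    ae_all_iff.2 fun n => by
      simpa only [s, Function.iterate_succ_apply'] using hT (s n) (s (n + 1))
  have hdiag : ∀ᵐ ω ∂μ, ∀ i, d (s i) (s i) ω = 0 :=
    ae_all_iff.2 fun i => (hd.eq_zero_iff _ _).2 rfl
  have hsymm : ∀ᵐ ω ∂μ, ∀ i j, d (s i) (s j) ω = d (s j) (s i) ω :=
    ae_all_iff.2 fun i => ae_all_iff.2 fun j => hd.symm _ _
  have htri : ∀ᵐ ω ∂μ, ∀ i j k, d (s i) (s k) ω ≤ d (s i) (s j) ω + d (s j) (s k) ω :=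
    ae_all_iff.2 fun i => ae_all_iff.2 fun j => ae_all_iff.2 fun k => hd.triangle _ _ _
  refine elCauchy_of_ae_le (g := fun N ω => α ω ^ N * d (s 0) (s 1) ω / (1 - α ω))
    (fun _ _ => hd.meas _ _)
    (fun N => (((hαm.pow_const N).mul (hd.meas _ _)).div
      (measurable_const.sub hαm)).aestronglyMeasurable)
    ?_ ?_
  · filter_upwards [hα0, hα1] with ω h0 h1
    simpa [mul_div_assoc] using
      (tendsto_pow_atTop_nhds_zero_of_lt_one h0 h1).mul_const (d (s 0) (s 1) ω / (1 - α ω))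
  · filter_upwards [hα0, hα1, hdiag, hsymm, htri, hstep]
      with ω h0 h1 hdiag hsymm htri hstep
    exact fun N m n hm hn => le_geom_of_step_le h0 h1 hdiag hsymm htri hstep hm hn

end Contraction

/-- random Banach contraction mapping principle. -/
theorem random_contraction_fixed_point {E : Type*} [Nonempty E]
    (μ : Measure Ω) [IsProbabilityMeasure μ]
    (d : E → E → Ω → ℝ) (hd : IsRandomMetric μ d) (hcomp : ELComplete μ d)
    (α : Ω → ℝ) (hαm : Measurable α)
    (hα0 : ∀ᵐ ω ∂μ, 0 ≤ α ω) (hα1 : ∀ᵐ ω ∂μ, α ω < 1)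
    (T : E → E)
    (hT : ∀ x y, ∀ᵐ ω ∂μ, d (T x) (T y) ω ≤ α ω * d x y ω) :
    ∃! x : E, T x = x := by
  obtain ⟨x₀⟩ := ‹Nonempty E›
  obtain ⟨x, hx⟩ := hcomp _ (elCauchy_iterate_of_contraction hd hαm hα0 hα1 hT x₀)
  have hfix : T x = x := by
    refine (hx.map_contraction hd hα1 hT).unique hd ?_
    simpa only [Function.comp_def, ← Function.iterate_succ_apply' T] using
      hx.comp_tendsto (tendsto_add_atTop_nat 1)
  exact ⟨x, hfix, fun y hy => eq_of_fixed_of_contraction hd hα1 hT hy hfix⟩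
end

section
/- Let (E,d) be an (ε,λ)-complete random metric space with base (Ω,𝓕,P), α ∈ L⁰₊(𝓕) with α < 1 a.s., and T : E → E a map with d(T(x),T(y)) ≤ α·d(x,y) for all x,y. Then for the unique fixed point x* of T, one has d(Tⁿ(x), x*) ≤ (αⁿ/(1−α))·d(x,T(x)) for every x ∈ E and n ∈ ℕ, and the sequence d(Tⁿ(x),x*) converges to 0 almost surely for every x ∈ E. -/
open MeasureTheory Filter Set

variable {Ω : Type*} [MeasurableSpace Ω]

/-- error estimate and a.s. convergence of Picard iterates. -/
theorem random_contraction_iterates {E : Type*} [Nonempty E]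
    (μ : Measure Ω) [IsProbabilityMeasure μ]
    (d : E → E → Ω → ℝ) (hd : IsRandomMetric μ d) (hcomp : ELComplete μ d)
    (α : Ω → ℝ) (hαm : Measurable α)
    (hα0 : ∀ᵐ ω ∂μ, 0 ≤ α ω) (hα1 : ∀ᵐ ω ∂μ, α ω < 1)
    (T : E → E)
    (hT : ∀ x y, ∀ᵐ ω ∂μ, d (T x) (T y) ω ≤ α ω * d x y ω)
    (xs : E) (hfix : T xs = xs) :
    (∀ x : E, ∀ n : ℕ,
        ∀ᵐ ω ∂μ, d (T^[n] x) xs ω ≤ (α ω ^ n / (1 - α ω)) * d x (T x) ω) ∧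
    (∀ x : E, ∀ᵐ ω ∂μ,
        Tendsto (fun n : ℕ => d (T^[n] x) xs ω) atTop (nhds 0)) := by
  -- key estimate: d (T^[n] x) xs ≤ α^n * d x xs a.e.
  have key : ∀ x : E, ∀ n : ℕ, ∀ᵐ ω ∂μ,
      d (T^[n] x) xs ω ≤ α ω ^ n * d x xs ω := by
    intro x n
    induction n with
    | zero =>
      filter_upwards with ω
      simp
    | succ n ih =>
      have hTn := hT (T^[n] x) xs
      filter_upwards [ih, hTn, hα0] with ω h1 h2 h3
      have : d (T^[n + 1] x) xs ω ≤ α ω * d (T^[n] x) xs ω := by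
        rw [Function.iterate_succ_apply']
        calc d (T (T^[n] x)) xs ω = d (T (T^[n] x)) (T xs) ω := by rw [hfix]
          _ ≤ α ω * d (T^[n] x) xs ω := h2
      calc d (T^[n + 1] x) xs ω ≤ α ω * d (T^[n] x) xs ω := this
        _ ≤ α ω * (α ω ^ n * d x xs ω) := by
            exact mul_le_mul_of_nonneg_left h1 h3
        _ = α ω ^ (n + 1) * d x xs ω := by ring
  -- d x xs ≤ d x (T x) / (1 - α) a.e.
  have hdiv : ∀ x : E, ∀ᵐ ω ∂μ, d x xs ω ≤ d x (T x) ω / (1 - α ω) := by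
    intro x
    filter_upwards [hd.triangle x (T x) xs, hT x xs, hα1] with ω htri hc h1
    have h2 : d (T x) xs ω ≤ α ω * d x xs ω := by
      calc d (T x) xs ω = d (T x) (T xs) ω := by rw [hfix]
        _ ≤ α ω * d x xs ω := hc
    have hpos : 0 < 1 - α ω := by linarith
    rw [le_div_iff₀ hpos]
    nlinarith
  constructor
  · intro x n
    filter_upwards [key x n, hdiv x, hα0, hα1] with ω h1 h2 h3 h4
    have hpow : (0 : ℝ) ≤ α ω ^ n := pow_nonneg h3 n
    calc d (T^[n] x) xs ω ≤ α ω ^ n * d x xs ω := h1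
      _ ≤ α ω ^ n * (d x (T x) ω / (1 - α ω)) := mul_le_mul_of_nonneg_left h2 hpow
      _ = (α ω ^ n / (1 - α ω)) * d x (T x) ω := by ring
  · intro x
    have hnn : ∀ᵐ ω ∂μ, ∀ n : ℕ, 0 ≤ d (T^[n] x) xs ω :=
      ae_all_iff.2 fun n => hd.nonneg _ _
    have hkey : ∀ᵐ ω ∂μ, ∀ n : ℕ, d (T^[n] x) xs ω ≤ α ω ^ n * d x xs ω :=
      ae_all_iff.2 (key x)
    filter_upwards [hnn, hkey, hα0, hα1] with ω h1 h2 h3 h4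
    have habs : |α ω| < 1 := abs_lt.2 ⟨by linarith, h4⟩
    have hlim : Tendsto (fun n : ℕ => α ω ^ n * d x xs ω) atTop (nhds 0) := by
      simpa using (tendsto_pow_atTop_nhds_zero_of_abs_lt_one habs).mul_const (d x xs ω)
    exact squeeze_zero h1 h2 hlim
end

section
/- Let (E,d) be an (ε,λ)-complete random metric space with base (Ω,𝓕,P) and T : E → E a map such that for some n ∈ ℕ and some α ∈ L⁰₊(𝓕) with α < 1 a.s., d(Tⁿ(x),Tⁿ(y)) ≤ α·d(x,y) for all x,y ∈ E. Then T has a unique fixed point. -/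
open MeasureTheory Filter Set

variable {Ω : Type*} [MeasurableSpace Ω]

/-!
Along the orbit of `x₀` under `S = T^[n]`, the a.e. contraction and the triangle inequality give
`d (S^[m] x₀) (S^[k] x₀) ≤ α ^ N * d x₀ (S x₀) / (1 - α)` a.e. for `m, k ≥ N`. The right-hand side
tends to `0` a.e., hence in probability, so the orbit is `(ε,λ)`-Cauchy and converges to some `x`.
A random variable dominated a.e. by every term of a sequence tending to `0` in probability is
`≤ 0` a.e. (pass to an a.e. convergent subsequence); applied to
`d (S x) x ≤ d (S^[k] x₀) x + d (S^[k+1] x₀) x` it makes `x` a fixed point of `S`, and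
`d x y ≤ α * d x y` with `α < 1` a.e. makes it unique. As `T` commutes with `S`, `T x` is again a
fixed point of `S`, hence equal to `x`.
-/

open Function

namespace Function

theorem existsUnique_isFixedPt_of_iterate {α : Type*} {f : α → α} {n : ℕ}
    (h : ∃! x, IsFixedPt f^[n] x) : ∃! x, IsFixedPt f x := by
  obtain ⟨x, hx, huniq⟩ := h
  have hfx : IsFixedPt f x := huniq (f x) (hx.map (Commute.self_iterate f n))
  exact ⟨x, hfx, fun y hy => huniq y (hy.iterate n)⟩

end Function

namespace MeasureTheory

variable {μ : Measure Ω}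

theorem TendstoInMeasure.add {ι E : Type*} [SeminormedAddCommGroup E] {l : Filter ι}
    {f f' : ι → Ω → E} {g g' : Ω → E} (hf : TendstoInMeasure μ f l g)
    (hf' : TendstoInMeasure μ f' l g') : TendstoInMeasure μ (f + f') l (g + g') := by
  rw [tendstoInMeasure_iff_norm] at *
  intro ε hε
  have hbound : ∀ i, μ {ω | ε ≤ ‖(f + f') i ω - (g + g') ω‖} ≤
      μ {ω | ε / 2 ≤ ‖f i ω - g ω‖} + μ {ω | ε / 2 ≤ ‖f' i ω - g' ω‖} := by
    intro i
    refine (measure_mono fun ω hω => ?_).trans (measure_union_le _ _)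
    have : ‖(f + f') i ω - (g + g') ω‖ ≤ ‖f i ω - g ω‖ + ‖f' i ω - g' ω‖ := by
      simpa only [Pi.add_apply, add_sub_add_comm] using norm_add_le _ _
    by_contra h
    simp only [mem_union, mem_ofPred_eq, not_or, not_le] at h hω
    linarith
  exact tendsto_of_tendsto_of_tendsto_of_le_of_le tendsto_const_nhds
    (by simpa using (hf _ (half_pos hε)).add (hf' _ (half_pos hε))) (fun _ => zero_le) hbound

theorem TendstoInMeasure.ae_le_zero_of_forall_ae_le {f : Ω → ℝ} {g : ℕ → Ω → ℝ}
    (hg : TendstoInMeasure μ g atTop 0) (h : ∀ k, f ≤ᵐ[μ] g k) : f ≤ᵐ[μ] 0 := by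
  obtain ⟨ns, -, hns⟩ := hg.exists_seq_tendsto_ae
  filter_upwards [hns, ae_all_iff.2 fun i => h (ns i)] with ω hω hle
  exact ge_of_tendsto' hω hle

theorem ofReal_one_sub_lt_measure_iff [IsProbabilityMeasure μ] {s : Set Ω}
    (hs : MeasurableSet s) {l : ℝ} (hl0 : 0 ≤ l) (hl1 : l ≤ 1) :
    ENNReal.ofReal (1 - l) < μ s ↔ μ sᶜ < ENNReal.ofReal l := by
  have hl : ENNReal.ofReal l ≤ 1 := ENNReal.ofReal_le_one.2 hl1
  rw [prob_compl_eq_one_sub hs, ENNReal.ofReal_sub _ hl0, ENNReal.ofReal_one,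
    ENNReal.sub_lt_iff_lt_right ENNReal.ofReal_ne_top hl,
    ENNReal.sub_lt_iff_lt_right (measure_ne_top μ s) prob_le_one, add_comm]

theorem tendstoInMeasure_pow_mul_div_one_sub [IsFiniteMeasure μ] {α c : Ω → ℝ}
    (hα : Measurable α) (hc : Measurable c) (hα0 : ∀ᵐ ω ∂μ, 0 ≤ α ω)
    (hα1 : ∀ᵐ ω ∂μ, α ω < 1) :
    TendstoInMeasure μ (fun N ω => α ω ^ N * c ω / (1 - α ω)) atTop 0 := by
  refine tendstoInMeasure_of_tendsto_ae
    (fun N => (((hα.pow_const N).mul hc).div (measurable_const.sub hα)).aestronglyMeasurable) ?_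
  filter_upwards [hα0, hα1] with ω h0 h1
  simpa using ((tendsto_pow_atTop_nhds_zero_of_lt_one h0 h1).mul_const (c ω)).div_const _

end MeasureTheory

def AELipschitzWith (μ : Measure Ω) {E : Type*} (d : E → E → Ω → ℝ) (α : Ω → ℝ) (S : E → E) :
    Prop :=
  ∀ x y, ∀ᵐ ω ∂μ, d (S x) (S y) ω ≤ α ω * d x y ω

namespace IsRandomMetric

variable {μ : Measure Ω} {E : Type*} {d : E → E → Ω → ℝ} {S : E → E} {α : Ω → ℝ}

theorem tendstoInMeasure_of_elTendsto [IsProbabilityMeasure μ] (hd : IsRandomMetric μ d)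
    {s : ℕ → E} {x : E} (h : ELTendsto μ d s x) :
    TendstoInMeasure μ (fun k => d (s k) x) atTop 0 := by
  rw [tendstoInMeasure_iff_norm]
  intro ε hε
  rw [ENNReal.tendsto_atTop_zero]
  intro δ hδ
  obtain ⟨l, -, hl0, hlδ⟩ := ENNReal.lt_iff_exists_real_btwn.1 (lt_min hδ zero_lt_one)
  have hl1 : l < 1 := by simpa using hlδ.trans_le (min_le_right _ _)
  obtain ⟨N, hN⟩ := h ε hε l (ENNReal.ofReal_pos.1 hl0) hl1
  refine ⟨N, fun k hk => ?_⟩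
  have hcompl := (ofReal_one_sub_lt_measure_iff (measurableSet_lt (hd.meas _ _) measurable_const)
    (ENNReal.ofReal_pos.1 hl0).le hl1.le).1 (hN k hk)
  refine (measure_mono_ae ?_).trans (hcompl.le.trans (hlδ.le.trans (min_le_left _ _)))
  filter_upwards [hd.nonneg (s k) x] with ω h0 hω
  change ε ≤ ‖d (s k) x ω - 0‖ at hω
  change ¬ d (s k) x ω < ε
  rw [sub_zero, Real.norm_of_nonneg h0] at hω
  exact hω.not_gt

theorem elCauchy_of_forall_ae_le [IsProbabilityMeasure μ] (hd : IsRandomMetric μ d)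
    {s : ℕ → E} {f : ℕ → Ω → ℝ} (hf : TendstoInMeasure μ f atTop 0)
    (hle : ∀ N m k, N ≤ m → N ≤ k → d (s m) (s k) ≤ᵐ[μ] f N) : ELCauchy μ d s := by
  intro ε hε l hl0 hl1
  obtain ⟨N, hN⟩ := eventually_atTop.1 <|
    (tendstoInMeasure_iff_norm.1 hf ε hε).eventually (gt_mem_nhds (ENNReal.ofReal_pos.2 hl0))
  refine ⟨N, fun m hm k hk => ?_⟩
  refine (ofReal_one_sub_lt_measure_iff (measurableSet_lt (hd.meas _ _) measurable_const)
    hl0.le hl1.le).2 ((measure_mono_ae ?_).trans_lt (hN N le_rfl))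
  filter_upwards [hle N m k hm hk] with ω hω hε
  change ¬ d (s m) (s k) ω < ε at hε
  change ε ≤ ‖f N ω - 0‖
  rw [sub_zero, Real.norm_eq_abs]
  exact ((not_lt.1 hε).trans hω).trans (le_abs_self _)

theorem eq_of_forall_ae_le (hd : IsRandomMetric μ d) {x y : E} {g : ℕ → Ω → ℝ}
    (hg : TendstoInMeasure μ g atTop 0) (h : ∀ k, d x y ≤ᵐ[μ] g k) : x = y := by
  refine (hd.eq_zero_iff x y).1 ?_
  filter_upwards [hd.nonneg x y, hg.ae_le_zero_of_forall_ae_le h] with ω h0 h1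
  exact le_antisymm h1 h0

theorem ae_dist_iterate_succ_le (hα0 : ∀ᵐ ω ∂μ, 0 ≤ α ω) (hS : AELipschitzWith μ d α S)
    (x : E) (k : ℕ) : ∀ᵐ ω ∂μ, d (S^[k] x) (S^[k + 1] x) ω ≤ α ω ^ k * d x (S x) ω := by
  induction k with
  | zero => simp
  | succ k ih =>
    filter_upwards [ih, hS (S^[k] x) (S^[k + 1] x), hα0] with ω hk hSk h0
    calc d (S^[k + 1] x) (S^[k + 1 + 1] x) ω = d (S (S^[k] x)) (S (S^[k + 1] x)) ω := by
          simp only [iterate_succ_apply']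
      _ ≤ α ω * d (S^[k] x) (S^[k + 1] x) ω := hSk
      _ ≤ α ω * (α ω ^ k * d x (S x) ω) := mul_le_mul_of_nonneg_left hk h0
      _ = α ω ^ (k + 1) * d x (S x) ω := by ring

theorem ae_dist_iterate_le_geom_sum (hd : IsRandomMetric μ d) (hα0 : ∀ᵐ ω ∂μ, 0 ≤ α ω)
    (hS : AELipschitzWith μ d α S) (x : E) {m n : ℕ} (hmn : m ≤ n) :
    ∀ᵐ ω ∂μ, d (S^[m] x) (S^[n] x) ω ≤ (∑ i ∈ Finset.Ico m n, α ω ^ i) * d x (S x) ω := by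
  induction n, hmn using Nat.le_induction with
  | base =>
    filter_upwards [(hd.eq_zero_iff (S^[m] x) _).2 rfl] with ω hω
    simp only [Finset.Ico_self, Finset.sum_empty, zero_mul]
    exact hω.le
  | succ n hmn ih =>
    filter_upwards [ih, ae_dist_iterate_succ_le hα0 hS x n,
      hd.triangle (S^[m] x) (S^[n] x) (S^[n + 1] x)] with ω h1 h2 h3
    rw [Finset.sum_Ico_succ_top hmn, add_mul]
    linarith

theorem ae_dist_iterate_le (hd : IsRandomMetric μ d) (hα0 : ∀ᵐ ω ∂μ, 0 ≤ α ω)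
    (hα1 : ∀ᵐ ω ∂μ, α ω < 1) (hS : AELipschitzWith μ d α S) (x : E) {N m n : ℕ}
    (hm : N ≤ m) (hn : N ≤ n) :
    ∀ᵐ ω ∂μ, d (S^[m] x) (S^[n] x) ω ≤ α ω ^ N * d x (S x) ω / (1 - α ω) := by
  wlog hmn : m ≤ n generalizing m n
  · filter_upwards [this hn hm (le_of_not_ge hmn), hd.symm (S^[m] x) (S^[n] x)] with ω h hsymm
    rwa [hsymm]
  filter_upwards [ae_dist_iterate_le_geom_sum hd hα0 hS x hmn, hα0, hα1, hd.nonneg x (S x)]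
    with ω hsum h0 h1 hc
  calc d (S^[m] x) (S^[n] x) ω ≤ (∑ i ∈ Finset.Ico m n, α ω ^ i) * d x (S x) ω := hsum
    _ ≤ α ω ^ N / (1 - α ω) * d x (S x) ω := by
        refine mul_le_mul_of_nonneg_right ((geom_sum_Ico_le_of_lt_one h0 h1).trans ?_) hc
        exact div_le_div_of_nonneg_right (pow_le_pow_of_le_one h0 h1.le hm) (sub_pos.2 h1).le
    _ = α ω ^ N * d x (S x) ω / (1 - α ω) := by ring

theorem elCauchy_iterate [IsProbabilityMeasure μ] (hd : IsRandomMetric μ d) (hα : Measurable α)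
    (hα0 : ∀ᵐ ω ∂μ, 0 ≤ α ω) (hα1 : ∀ᵐ ω ∂μ, α ω < 1) (hS : AELipschitzWith μ d α S)
    (x : E) : ELCauchy μ d fun k => S^[k] x :=
  hd.elCauchy_of_forall_ae_le (tendstoInMeasure_pow_mul_div_one_sub hα (hd.meas x (S x)) hα0 hα1)
    fun _ _ _ hm hn => ae_dist_iterate_le hd hα0 hα1 hS x hm hn

theorem isFixedPt_of_elTendsto_iterate [IsProbabilityMeasure μ] (hd : IsRandomMetric μ d)
    (hα1 : ∀ᵐ ω ∂μ, α ω ≤ 1) (hS : AELipschitzWith μ d α S) {x₀ x : E}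
    (h : ELTendsto μ d (fun k => S^[k] x₀) x) : IsFixedPt S x := by
  have hlim := hd.tendstoInMeasure_of_elTendsto h
  have hlim' : TendstoInMeasure μ (fun k => d (S^[k + 1] x₀) x) atTop 0 :=
    hlim.comp (tendsto_add_atTop_nat 1)
  have hsum := hlim.add hlim'
  rw [add_zero] at hsum
  refine hd.eq_of_forall_ae_le hsum fun k => ?_
  filter_upwards [hd.triangle (S x) (S^[k + 1] x₀) x, hS x (S^[k] x₀), hd.symm x (S^[k] x₀),
    hd.nonneg x (S^[k] x₀), hα1] with ω htri hSk hsymm h0 h1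
  have hstep : d (S x) (S^[k + 1] x₀) ω ≤ d (S^[k] x₀) x ω := by
    rw [iterate_succ_apply', ← hsymm]
    exact hSk.trans (mul_le_of_le_one_left h0 h1)
  simp only [Pi.add_apply]
  linarith

theorem eq_of_isFixedPt (hd : IsRandomMetric μ d) (hα1 : ∀ᵐ ω ∂μ, α ω < 1)
    (hS : AELipschitzWith μ d α S) {x y : E} (hx : IsFixedPt S x) (hy : IsFixedPt S y) :
    x = y := by
  refine (hd.eq_zero_iff x y).1 ?_
  filter_upwards [hS x y, hd.nonneg x y, hα1] with ω h h0 h1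
  rw [hx, hy] at h
  change d x y ω = 0
  nlinarith

theorem existsUnique_isFixedPt [Nonempty E] [IsProbabilityMeasure μ] (hd : IsRandomMetric μ d)
    (hcomp : ELComplete μ d) (hα : Measurable α) (hα0 : ∀ᵐ ω ∂μ, 0 ≤ α ω)
    (hα1 : ∀ᵐ ω ∂μ, α ω < 1) (hS : AELipschitzWith μ d α S) : ∃! x, IsFixedPt S x := by
  obtain ⟨x₀⟩ := ‹Nonempty E›
  obtain ⟨x, hx⟩ := hcomp _ (hd.elCauchy_iterate hα hα0 hα1 hS x₀)
  have hfix : IsFixedPt S x := hd.isFixedPt_of_elTendsto_iterate (hα1.mono fun _ h => h.le) hS hx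
  exact ⟨x, hfix, fun y hy => hd.eq_of_isFixedPt hα1 hS hy hfix⟩

end IsRandomMetric

/-- fixed point for mappings with a contractive iterate. -/
theorem random_contraction_iterate_fixed_point {E : Type*} [Nonempty E]
    (μ : Measure Ω) [IsProbabilityMeasure μ]
    (d : E → E → Ω → ℝ) (hd : IsRandomMetric μ d) (hcomp : ELComplete μ d)
    (T : E → E) (n : ℕ)
    (α : Ω → ℝ) (hαm : Measurable α)
    (hα0 : ∀ᵐ ω ∂μ, 0 ≤ α ω) (hα1 : ∀ᵐ ω ∂μ, α ω < 1)
    (hT : ∀ x y, ∀ᵐ ω ∂μ, d (T^[n] x) (T^[n] y) ω ≤ α ω * d x y ω) :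
    ∃! x : E, T x = x :=
  existsUnique_isFixedPt_of_iterate (hd.existsUnique_isFixedPt hcomp hαm hα0 hα1 hT)
end

section
/- Let (E,d) be a random metric space with base (Ω,𝓕,P) and G a σ-stable subset of E. Then the closure of G in the (ε,λ)-topology coincides with the closure of G in the L⁰-topology; in particular G is (ε,λ)-closed iff G is L⁰-closed. -/
/-!
If `x` lies in the `(ε,λ)`-closure of `G`, choose `gₙ ∈ G` with
`P(d(x,gₙ) ≥ 1/(n+1)) < 2^{-(n+1)}`. By Borel–Cantelli, almost surely `d(x,gₙ)` eventually drops
below every positive level, so for a random `ε > 0` the sets `{d(x,gₙ) < ε}` cover `Ω` up to a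
null set. Concatenating the `gₙ` along the disjointed cover gives, by σ-stability, some `y ∈ G`
with `d(x,y) < ε` almost surely. Conversely, constant `ε` are admissible in the `L⁰`-topology, and
`d(x,g) < ε` a.s. forces `P(d(x,g) < ε) = 1`.
-/

open MeasureTheory Filter Set

variable {Ω : Type*} [MeasurableSpace Ω]

/-- A countable measurable partition of `Ω`. -/
def IsMeasPartition {Ω : Type*} [MeasurableSpace Ω] (A : ℕ → Set Ω) : Prop :=
  (∀ n, MeasurableSet (A n)) ∧ Pairwise (Function.onFun Disjoint A) ∧ (⋃ n, A n) = Set.univ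

/-- `x` is the countable concatenation `Σₙ Ĩ_{Aₙ} xₙ` of `(xₙ)` along `(Aₙ)`:
`Ĩ_{Aₙ}·d(x,xₙ) = 0` for all `n`. -/
def IsConcat {Ω : Type*} [MeasurableSpace Ω] (μ : MeasureTheory.Measure Ω) {E : Type*}
    (d : E → E → Ω → ℝ) (A : ℕ → Set Ω) (xs : ℕ → E) (x : E) : Prop :=
  ∀ n, ∀ᵐ ω ∂μ, ω ∈ A n → d x (xs n) ω = 0

/-- The random metric space `(E,d)` is σ-stable. -/
def SigmaStable {Ω : Type*} [MeasurableSpace Ω] (μ : MeasureTheory.Measure Ω) {E : Type*}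
    (d : E → E → Ω → ℝ) : Prop :=
  ∀ A : ℕ → Set Ω, IsMeasPartition A → ∀ xs : ℕ → E, ∃ x, IsConcat μ d A xs x

/-- A nonempty subset `G` is σ-stable: countable concatenations of elements of `G` exist in `G`. -/
def SigmaStableSet {Ω : Type*} [MeasurableSpace Ω] (μ : MeasureTheory.Measure Ω) {E : Type*}
    (d : E → E → Ω → ℝ) (G : Set E) : Prop :=
  ∀ A : ℕ → Set Ω, IsMeasPartition A → ∀ xs : ℕ → E, (∀ n, xs n ∈ G) →
    ∃ x ∈ G, IsConcat μ d A xs x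

/-- The closure of `G` for the `(ε,λ)`-topology: `x` is in the closure iff every basic
`(ε,λ)`-neighbourhood of `x` meets `G`. -/
def ELClosure {Ω : Type*} [MeasurableSpace Ω] (μ : MeasureTheory.Measure Ω) {E : Type*}
    (d : E → E → Ω → ℝ) (G : Set E) : Set E :=
  {x | ∀ ε : ℝ, 0 < ε → ∀ l : ℝ, 0 < l → l < 1 →
    ∃ g ∈ G, μ {ω | d x g ω < ε} > ENNReal.ofReal (1 - l)}

/-- The closure of `G` for the `L⁰`-topology: `x` is in the closure iff every basic
`L⁰`-neighbourhood of `x` meets `G`. -/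
def L0Closure {Ω : Type*} [MeasurableSpace Ω] (μ : MeasureTheory.Measure Ω) {E : Type*}
    (d : E → E → Ω → ℝ) (G : Set E) : Set E :=
  {x | ∀ ε : Ω → ℝ, Measurable ε → (∀ᵐ ω ∂μ, 0 < ε ω) → ∃ g ∈ G, ∀ᵐ ω ∂μ, d x g ω < ε ω}

section

variable {E : Type*} {μ : Measure Ω} {d : E → E → Ω → ℝ} {G : Set E}

theorem l0Closure_subset_elClosure [IsProbabilityMeasure μ] :
    L0Closure μ d G ⊆ ELClosure μ d G := by
  intro x hx ε hε l hl _
  obtain ⟨g, hgG, hae⟩ := hx (fun _ => ε) measurable_const (ae_of_all _ fun _ => hε)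
  refine ⟨g, hgG, ?_⟩
  rw [measure_congr (ae_eq_univ.2 hae), measure_univ]
  exact ENNReal.ofReal_lt_one.2 (by linarith)

theorem exists_measure_le_dist_lt_of_mem_elClosure [IsZeroOrProbabilityMeasure μ] {x : E}
    (hmeas : ∀ y, Measurable (d x y)) (hx : x ∈ ELClosure μ d G) {δ l : ℝ} (hδ : 0 < δ)
    (hl : 0 < l) (hl1 : l < 1) : ∃ g ∈ G, μ {ω | δ ≤ d x g ω} < ENNReal.ofReal l := by
  obtain ⟨g, hgG, hlt⟩ := hx δ hδ l hl hl1
  refine ⟨g, hgG, ?_⟩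
  have hcompl : {ω | δ ≤ d x g ω} = {ω | d x g ω < δ}ᶜ := by ext; simp
  rw [hcompl]
  calc μ {ω | d x g ω < δ}ᶜ < 1 - ENNReal.ofReal (1 - l) :=
        prob_compl_lt_one_sub_of_lt_prob hlt (measurableSet_lt (hmeas g) measurable_const)
    _ = ENNReal.ofReal l := by
        rw [← ENNReal.ofReal_one, ← ENNReal.ofReal_sub _ (by linarith), sub_sub_cancel]

theorem exists_seq_ae_eventually_dist_lt_of_mem_elClosure [IsZeroOrProbabilityMeasure μ] {x : E}
    (hmeas : ∀ y, Measurable (d x y)) (hx : x ∈ ELClosure μ d G) :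
    ∃ g : ℕ → E, (∀ n, g n ∈ G) ∧ ∀ᵐ ω ∂μ, ∀ δ > 0, ∀ᶠ n in atTop, d x (g n) ω < δ := by
  have hl (n : ℕ) : 0 < (1 : ℝ) / 2 / 2 ^ n ∧ (1 : ℝ) / 2 / 2 ^ n < 1 := by
    constructor
    · positivity
    · rw [div_div, div_lt_one (by positivity)]
      linarith [one_le_pow₀ (M₀ := ℝ) (a := 2) (n := n) (by norm_num)]
  choose g hgG hg using fun n : ℕ => exists_measure_le_dist_lt_of_mem_elClosure hmeas hx
    (δ := 1 / ((n : ℝ) + 1)) (by positivity) (hl n).1 (hl n).2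
  refine ⟨g, hgG, ?_⟩
  have hsum : ∑' n : ℕ, μ {ω | 1 / ((n : ℝ) + 1) ≤ d x (g n) ω} ≠ ⊤ := by
    refine ne_top_of_le_ne_top ?_ (ENNReal.tsum_le_tsum fun n => (hg n).le)
    rw [← ENNReal.ofReal_tsum_of_nonneg (fun n => (hl n).1.le) (summable_geometric_two' 1)]
    exact ENNReal.ofReal_ne_top
  filter_upwards [ae_eventually_notMem hsum] with ω hω δ hδ
  filter_upwards [hω, (tendsto_one_div_add_atTop_nhds_zero_nat).eventually (gt_mem_nhds hδ)]
    with n hn hnδ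
  exact (not_le.1 hn).trans hnδ

theorem SigmaStableSet.exists_ae_exists_dist_eq_zero (hG : SigmaStableSet μ d G) {g : ℕ → E}
    (hg : ∀ n, g n ∈ G) {D : ℕ → Set Ω} (hD : ∀ n, MeasurableSet (D n))
    (hcover : ∀ᵐ ω ∂μ, ∃ n, ω ∈ D n) :
    ∃ y ∈ G, ∀ᵐ ω ∂μ, ∃ n, ω ∈ D n ∧ d y (g n) ω = 0 := by
  -- the null set `N` left uncovered by the `D n` is absorbed into every piece before disjointing
  set N := (⋃ n, D n)ᶜ
  have hA : IsMeasPartition (disjointed fun n => D n ∪ N) :=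
    ⟨MeasurableSet.disjointed fun n => (hD n).union (MeasurableSet.iUnion hD).compl,
      disjoint_disjointed _, by rw [iUnion_disjointed, ← iUnion_union, union_compl_self]⟩
  obtain ⟨y, hyG, hy⟩ := hG _ hA g hg
  refine ⟨y, hyG, ?_⟩
  filter_upwards [ae_all_iff.2 hy, hcover] with ω hyω ⟨m, hm⟩
  obtain ⟨n, hn⟩ := mem_iUnion.1 (hA.2.2.symm ▸ mem_univ ω)
  exact ⟨n, (disjointed_subset _ n hn).resolve_right fun hN => hN (mem_iUnion.2 ⟨m, hm⟩),
    hyω n hn⟩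

theorem elClosure_subset_l0Closure [IsZeroOrProbabilityMeasure μ] (hd : IsRandomMetric μ d)
    (hG : SigmaStableSet μ d G) : ELClosure μ d G ⊆ L0Closure μ d G := by
  intro x hx ε hε hεpos
  obtain ⟨g, hgG, hg⟩ := exists_seq_ae_eventually_dist_lt_of_mem_elClosure (hd.meas x) hx
  obtain ⟨y, hyG, hy⟩ := hG.exists_ae_exists_dist_eq_zero hgG
    (D := fun n => {ω | d x (g n) ω < ε ω}) (fun n => measurableSet_lt (hd.meas x (g n)) hε)
    (by filter_upwards [hg, hεpos] with ω hω hεω using (hω _ hεω).exists)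
  refine ⟨y, hyG, ?_⟩
  filter_upwards [hy, ae_all_iff.2 fun n => hd.triangle x (g n) y,
    ae_all_iff.2 fun n => hd.symm (g n) y] with ω ⟨n, hxg, hyg⟩ htri hsymm
  linarith [htri n, hsymm n, show d x (g n) ω < ε ω from hxg]

end

/-- for a σ-stable subset `G` of a random metric space, the `(ε,λ)`-closure
and the `L⁰`-closure of `G` coincide; in particular `G` is `(ε,λ)`-closed iff it is
`L⁰`-closed. -/
theorem elClosure_eq_l0Closure {E : Type*}
    (μ : Measure Ω) [IsProbabilityMeasure μ]
    (d : E → E → Ω → ℝ) (hd : IsRandomMetric μ d)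
    (G : Set E) (hG : SigmaStableSet μ d G) :
    ELClosure μ d G = L0Closure μ d G ∧
      (ELClosure μ d G = G ↔ L0Closure μ d G = G) := by
  have h := (elClosure_subset_l0Closure hd hG).antisymm l0Closure_subset_elClosure
  exact ⟨h, by rw [h]⟩
end

section
/- Let (M,d) be a metric space and T : Ω × M → M a sample-continuous strong random operator on a probability space (Ω,𝓕,P). Then the lifted map T̂ : L⁰(𝓕,M) → L⁰(𝓕,M), sending the equivalence class of a strong random element x⁰ to the equivalence class of ω ↦ T(ω,x⁰(ω)), is well-defined, σ-stable and continuous for the (ε,λ)-topology; moreover x ∈ L⁰(𝓕,M) is a fixed point of T̂ if and only if any representative x⁰ of x is a random fixed point of T (i.e., T(ω,x⁰(ω)) = x⁰(ω) for a.e. ω). -/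
/-! The composite `ω ↦ T(ω, x(ω))` of a Carathéodory map with a strongly measurable `x` is strongly
measurable, because `T` is jointly measurable on `Ω × closure (range x)`, a separable and hence
second-countable space. The `(ε,λ)`-convergence of the distances `dist (sₙ ω) (x ω)` is convergence
in probability, which is characterised by almost sure convergence of a further subsequence of every
subsequence; the sample-continuous `T` preserves the latter pointwise, hence the former.
Well-definedness, σ-stability and the fixed-point correspondence are pointwise almost sure
statements. -/

open MeasureTheory Filter Set

variable {Ω : Type*} [MeasurableSpace Ω]

open scoped ENNReal Topology

theorem ENNReal.tendsto_nhds_zero_iff_eventually_lt_ofReal {ι : Type*} {l : Filter ι}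
    {v : ι → ℝ≥0∞} :
    Tendsto v l (𝓝 0) ↔ ∀ r : ℝ, 0 < r → r < 1 → ∀ᶠ i in l, v i < ENNReal.ofReal r := by
  refine ⟨fun h r hr _ => h.eventually_lt_const (ENNReal.ofReal_pos.mpr hr), fun h => ?_⟩
  refine ENNReal.nhds_zero_basis.tendsto_right_iff.mpr fun a ha => ?_
  obtain ⟨r, -, hr_pos, hr_lt⟩ := ENNReal.lt_iff_exists_real_btwn.mp ha
  have hr : 0 < r := ENNReal.ofReal_pos.mp hr_pos
  have hr_half : min r (1 / 2) < 1 := (min_le_right r _).trans_lt one_half_lt_one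
  filter_upwards [h (min r (1 / 2)) (lt_min hr one_half_pos) hr_half] with i hi
  exact hi.trans_le ((ENNReal.ofReal_le_ofReal (min_le_left _ _)).trans hr_lt.le)

namespace MeasureTheory

theorem ofReal_one_sub_lt_measure_iff_measure_compl_lt {μ : Measure Ω}
    [IsProbabilityMeasure μ] {s : Set Ω} (hs : NullMeasurableSet s μ) {r : ℝ} (hr₀ : 0 ≤ r)
    (hr₁ : r ≤ 1) :
    ENNReal.ofReal (1 - r) < μ s ↔ μ sᶜ < ENNReal.ofReal r := by
  rw [prob_compl_eq_one_sub₀ hs, ENNReal.ofReal_sub _ hr₀, ENNReal.ofReal_one]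
  exact ENNReal.cancel_of_ne ENNReal.ofReal_ne_top |>.tsub_lt_iff_tsub_lt
    (ENNReal.cancel_of_ne (measure_ne_top μ s)) (ENNReal.ofReal_le_one.mpr hr₁) prob_le_one

theorem StronglyMeasurable.caratheodory_comp {X Y : Type*} [MetricSpace X] [MeasurableSpace X]
    [BorelSpace X] [TopologicalSpace Y] [TopologicalSpace.PseudoMetrizableSpace Y]
    {T : Ω → X → Y} (hT_meas : ∀ x, StronglyMeasurable fun ω => T ω x)
    (hT_cont : ∀ ω, Continuous (T ω)) {x : Ω → X} (hx : StronglyMeasurable x) :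
    StronglyMeasurable fun ω => T ω (x ω) := by
  have : TopologicalSpace.SeparableSpace (closure (range x)) :=
    hx.isSeparable_range.closure.separableSpace
  have : SecondCountableTopology (closure (range x)) :=
    UniformSpace.secondCountable_of_separable _
  have hT_joint : StronglyMeasurable
      (Function.uncurry fun (y : closure (range x)) (ω : Ω) => T ω y) :=
    stronglyMeasurable_uncurry_of_continuous_of_stronglyMeasurable
      (fun ω => (hT_cont ω).comp continuous_subtype_val) (fun y => hT_meas y)
  have hx_closure : Measurable fun ω =>
      (⟨x ω, subset_closure (mem_range_self ω)⟩ : closure (range x)) :=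
    hx.measurable.subtype_mk
  exact hT_joint.comp_measurable (hx_closure.prodMk measurable_id)

theorem TendstoInMeasure.caratheodory_comp {E F : Type*} [PseudoEMetricSpace E]
    [PseudoEMetricSpace F] {μ : Measure Ω} [IsFiniteMeasure μ] {T : Ω → E → F}
    (hT_cont : ∀ ω, Continuous (T ω)) {f : ℕ → Ω → E} {g : Ω → E}
    (hTf : ∀ n, AEStronglyMeasurable (fun ω => T ω (f n ω)) μ)
    (hfg : TendstoInMeasure μ f atTop g) :
    TendstoInMeasure μ (fun n ω => T ω (f n ω)) atTop fun ω => T ω (g ω) := by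
  rw [exists_seq_tendstoInMeasure_atTop_iff hTf]
  intro ns hns
  obtain ⟨ns', hns', hae⟩ := (hfg.comp hns.tendsto_atTop).exists_seq_tendsto_ae
  refine ⟨ns', hns', ?_⟩
  filter_upwards [hae] with ω hω
  exact ((hT_cont ω).tendsto _).comp hω

end MeasureTheory

theorem elTendsto_dist_iff_tendstoInMeasure {E : Type*} [PseudoMetricSpace E] {μ : Measure Ω}
    [IsProbabilityMeasure μ] {s : ℕ → Ω → E} {x : Ω → E}
    (hs : ∀ n, AEStronglyMeasurable (s n) μ) (hx : AEStronglyMeasurable x μ) :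
    ELTendsto μ (fun u v ω => dist (u ω) (v ω)) s x ↔ TendstoInMeasure μ s atTop x := by
  have hcompl : ∀ n (ε : ℝ), {ω | dist (s n ω) (x ω) < ε}ᶜ = {ω | ε ≤ dist (s n ω) (x ω)} :=
    fun n ε => by ext; simp
  simp only [ELTendsto, tendstoInMeasure_iff_dist,
    ENNReal.tendsto_nhds_zero_iff_eventually_lt_ofReal, eventually_atTop, gt_iff_lt]
  refine forall₂_congr fun ε _ => forall₃_congr fun r hr₀ hr₁ => ?_
  refine exists_congr fun N => forall₂_congr fun n _ => ?_
  rw [ofReal_one_sub_lt_measure_iff_measure_compl_lt _ hr₀.le hr₁.le, hcompl]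
  exact nullMeasurableSet_lt ((hs n).dist hx).aemeasurable aemeasurable_const

/-- for a sample-continuous strong random operator `T : Ω × M → M`, the
lifted operator `T̂` on `L⁰(𝓕,M)` (here expressed on strongly measurable representatives,
`L⁰(𝓕,M)` carrying the random metric `d(x,y)(ω) = dist(x(ω),y(ω))`) is well defined,
σ-stable and `(ε,λ)`-continuous, and fixed points of `T̂` correspond exactly to random
fixed points of `T`. -/
theorem lifted_operator_properties {M : Type*} [MetricSpace M] [MeasurableSpace M]
    [BorelSpace M]
    (μ : Measure Ω) [IsProbabilityMeasure μ]
    (T : Ω → M → M)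
    (hTs : ∀ x : M, MeasureTheory.StronglyMeasurable (fun ω => T ω x))
    (hTc : ∀ ω : Ω, Continuous (T ω)) :
    -- `T̂` maps `L⁰(𝓕,M)` to `L⁰(𝓕,M)` and is well defined on equivalence classes
    (∀ x : Ω → M, MeasureTheory.StronglyMeasurable x →
      MeasureTheory.StronglyMeasurable (fun ω => T ω (x ω))) ∧
    (∀ x y : Ω → M, MeasureTheory.StronglyMeasurable x →
      MeasureTheory.StronglyMeasurable y → x =ᵐ[μ] y →
      (fun ω => T ω (x ω)) =ᵐ[μ] (fun ω => T ω (y ω))) ∧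
    -- `T̂` is σ-stable: it preserves countable concatenations
    (∀ A : ℕ → Set Ω, IsMeasPartition A → ∀ xs : ℕ → Ω → M, ∀ x : Ω → M,
      IsConcat μ (fun u v ω => dist (u ω) (v ω)) A xs x →
      IsConcat μ (fun u v ω => dist (u ω) (v ω)) A
        (fun n => fun ω => T ω (xs n ω)) (fun ω => T ω (x ω))) ∧
    -- `T̂` is continuous for the `(ε,λ)`-topology
    (∀ (s : ℕ → Ω → M) (x : Ω → M), (∀ n, MeasureTheory.StronglyMeasurable (s n)) →
      MeasureTheory.StronglyMeasurable x →
      ELTendsto μ (fun u v ω => dist (u ω) (v ω)) s x →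
      ELTendsto μ (fun u v ω => dist (u ω) (v ω))
        (fun n => fun ω => T ω (s n ω)) (fun ω => T ω (x ω))) ∧
    -- fixed points of `T̂` are exactly random fixed points of `T`
    (∀ x : Ω → M, MeasureTheory.StronglyMeasurable x →
      (((fun ω => T ω (x ω)) =ᵐ[μ] x) ↔ ∀ᵐ ω ∂μ, T ω (x ω) = x ω)) := by
  have hT_sm {x : Ω → M} (hx : StronglyMeasurable x) : StronglyMeasurable fun ω => T ω (x ω) :=
    hx.caratheodory_comp hTs hTc
  refine ⟨fun x => hT_sm, fun x y _ _ hxy => ?_, fun A _ xs x hconc n => ?_,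
    fun s x hs hx hsx => ?_, fun x _ => Iff.rfl⟩
  · filter_upwards [hxy] with ω hω
    rw [hω]
  · filter_upwards [hconc n] with ω hω hωA
    rw [dist_eq_zero.mp (hω hωA), dist_self]
  · have hTs_ae n := (hT_sm (hs n)).aestronglyMeasurable (μ := μ)
    rw [elTendsto_dist_iff_tendstoInMeasure (fun n => (hs n).aestronglyMeasurable)
      hx.aestronglyMeasurable] at hsx
    rw [elTendsto_dist_iff_tendstoInMeasure hTs_ae (hT_sm hx).aestronglyMeasurable]
    exact hsx.caratheodory_comp hTc hTs_ae
end

section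
/- Let (X,d) be a Polish space and T : Ω × X → X a sample-continuous random operator on a probability space (Ω,𝓕,P) such that P(⋃_{m≥1} ⋃_{n≥1} ⋂_{x∈X} ⋂_{y∈X} {ω : d(Tⁿ(ω,x),Tⁿ(ω,y)) ≤ (1 − 1/m)·d(x,y)}) = 1, where Tⁿ(ω,·) denotes the n-th iterate of T(ω,·). Then T has a random fixed point, unique up to a.s. equality. -/
/-! On the almost sure event where some iterate `(T ω)^[n]` is a contraction, the Picard
iterates `(T ω)^[k] x₀` converge to the unique fixed point of `T ω`. Their pointwise limit is
measurable because each iterate is (a sample-continuous random operator is jointly measurable),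
and the contraction event is measurable because, by continuity, it suffices to test the
contraction inequality on a countable dense set of pairs. -/

open MeasureTheory Filter Set Topology

variable {Ω : Type*} [MeasurableSpace Ω]

lemma exists_contractingWith_of_dist_le {X : Type*} [MetricSpace X] {f : X → X} {c : ℝ}
    (hc : c < 1) (hf : ∀ x y, dist (f x) (f y) ≤ c * dist x y) :
    ∃ K, ContractingWith K f :=
  ⟨c.toNNReal, Real.toNNReal_lt_one.2 hc, LipschitzWith.of_dist_le_mul fun x y =>
    (hf x y).trans (mul_le_mul_of_nonneg_right (Real.le_coe_toNNReal c) dist_nonneg)⟩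

lemma tendsto_iterate_of_tendsto_iterate_iterate {X : Type*} [TopologicalSpace X] {f : X → X}
    {n : ℕ} (hn : 0 < n) {p : X} (hp : ∀ y, Tendsto (fun q => (f^[n])^[q] y) atTop (𝓝 p))
    (x : X) : Tendsto (fun k => f^[k] x) atTop (𝓝 p) := by
  refine tendsto_iff_forall_eventually_mem.2 fun U hU => ?_
  have hall : ∀ᶠ q in atTop, ∀ r : Fin n, (f^[n])^[q] (f^[r] x) ∈ U :=
    eventually_all.2 fun r => hp _ hU
  filter_upwards [(Nat.tendsto_div_const_atTop hn.ne').eventually hall] with k hk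
  have hsplit : f^[k] x = (f^[n])^[k / n] (f^[k % n] x) := by
    rw [← Function.iterate_mul, ← Function.iterate_add_apply, Nat.div_add_mod]
  simpa only [hsplit] using hk ⟨k % n, Nat.mod_lt k hn⟩

lemma ContractingWith.tendsto_iterate_of_iterate {X : Type*} [MetricSpace X] [CompleteSpace X]
    [Nonempty X] {f : X → X} {n : ℕ} {K : NNReal} (hf : ContractingWith K (f^[n])) (hn : 0 < n)
    (x : X) : Tendsto (fun k => f^[k] x) atTop (𝓝 (ContractingWith.fixedPoint (f^[n]) hf)) :=
  tendsto_iterate_of_tendsto_iterate_iterate hn hf.tendsto_iterate_fixedPoint x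

lemma ContractingWith.eq_of_isFixedPt_of_iterate {X : Type*} [MetricSpace X] {f : X → X}
    {n : ℕ} {K : NNReal} (hf : ContractingWith K (f^[n])) {x y : X}
    (hx : Function.IsFixedPt f x) (hy : Function.IsFixedPt f y) : x = y :=
  hf.fixedPoint_unique' (hx.iterate n) (hy.iterate n)

lemma measurableSet_setOf_forall_of_isClosed {X : Type*} [TopologicalSpace X]
    [TopologicalSpace.SeparableSpace X] {p : Ω → X → Prop}
    (hp : ∀ x, MeasurableSet {ω | p ω x}) (hclosed : ∀ ω, IsClosed {x | p ω x}) :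
    MeasurableSet {ω | ∀ x, p ω x} := by
  obtain ⟨s, hs, hdense⟩ := TopologicalSpace.exists_countable_dense X
  have hforall : {ω | ∀ x, p ω x} = ⋂ x ∈ s, {ω | p ω x} := by
    ext ω
    simp only [mem_ofPred_eq, mem_iInter]
    exact ⟨fun h x _ => h x, fun h => hdense.induction h (hclosed ω)⟩
  rw [hforall]
  exact MeasurableSet.biInter hs fun x _ => hp x

section RandomOperator

variable {X : Type*} [MetricSpace X] [TopologicalSpace.SeparableSpace X]
  [MeasurableSpace X] [BorelSpace X] {T : Ω → X → X}

lemma measurable_iterate_apply (hTm : ∀ x, Measurable fun ω => T ω x)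
    (hTc : ∀ ω, Continuous (T ω)) (k : ℕ) (x : X) : Measurable fun ω => (T ω)^[k] x := by
  have hT : Measurable (Function.uncurry fun x ω => T ω x) :=
    measurable_uncurry_of_continuous_of_measurable hTc hTm
  induction k with
  | zero => exact measurable_const
  | succ k ih =>
    simp only [Function.iterate_succ_apply']
    exact hT.comp (ih.prodMk measurable_id)

lemma measurableSet_setOf_forall_dist_le (hTm : ∀ x, Measurable fun ω => T ω x)
    (hTc : ∀ ω, Continuous (T ω)) (c : ℝ) :
    MeasurableSet {ω | ∀ x y, dist (T ω x) (T ω y) ≤ c * dist x y} := by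
  have hpairs := measurableSet_setOf_forall_of_isClosed (X := X × X)
    (p := fun ω z => dist (T ω z.1) (T ω z.2) ≤ c * dist z.1 z.2)
    (fun z => measurableSet_le ((hTm z.1).dist (hTm z.2)) measurable_const)
    (fun ω => isClosed_le (by fun_prop) (by fun_prop))
  simpa only [Prod.forall] using hpairs

end RandomOperator

/-- Hanš's random contraction theorem: a sample-continuous random
operator on a Polish space that is a.s. an eventual probabilistic contraction has a random
fixed point, unique up to a.s. equality. -/
theorem hans_random_fixed_point {X : Type*} [MetricSpace X] [TopologicalSpace.SeparableSpace X]
    [CompleteSpace X] [Nonempty X] [MeasurableSpace X] [BorelSpace X]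
    (μ : Measure Ω) [IsProbabilityMeasure μ]
    (T : Ω → X → X)
    (hTm : ∀ x : X, Measurable (fun ω => T ω x))
    (hTc : ∀ ω : Ω, Continuous (T ω))
    (hcontr : μ {ω | ∃ m : ℕ, 1 ≤ m ∧ ∃ n : ℕ, 1 ≤ n ∧ ∀ x y : X,
        dist ((T ω)^[n] x) ((T ω)^[n] y) ≤ (1 - 1 / (m : ℝ)) * dist x y} = 1) :
    ∃ V : Ω → X, Measurable V ∧ (∀ᵐ ω ∂μ, T ω (V ω) = V ω) ∧
      ∀ W : Ω → X, Measurable W → (∀ᵐ ω ∂μ, T ω (W ω) = W ω) → V =ᵐ[μ] W := by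
  obtain ⟨x₀⟩ := ‹Nonempty X›
  have hmeas : MeasurableSet {ω | ∃ m : ℕ, 1 ≤ m ∧ ∃ n : ℕ, 1 ≤ n ∧ ∀ x y : X,
      dist ((T ω)^[n] x) ((T ω)^[n] y) ≤ (1 - 1 / (m : ℝ)) * dist x y} := by
    simp only [ofPred_exists, ofPred_and]
    exact .iUnion fun m => (MeasurableSet.const _).inter <|
      .iUnion fun n => (MeasurableSet.const _).inter <| measurableSet_setOf_forall_dist_le
        (measurable_iterate_apply hTm hTc n) (fun ω => (hTc ω).iterate n) _
  have hcontracting : ∀ᵐ ω ∂μ, ∃ n, 0 < n ∧ ∃ K, ContractingWith K ((T ω)^[n]) := by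
    have hgood := (ae_mem_iff_measure_eq hmeas.nullMeasurableSet).2 (by rw [hcontr, measure_univ])
    filter_upwards [hgood] with ω ⟨m, hm, n, hn, hdist⟩
    exact ⟨n, hn, exists_contractingWith_of_dist_le
      (sub_lt_self 1 (one_div_pos.2 (Nat.cast_pos.2 hm))) hdist⟩
  obtain ⟨V, hVm, hV⟩ := measurable_limit_of_tendsto_metrizable_ae
    (fun k => (measurable_iterate_apply hTm hTc k x₀).aemeasurable)
    (hcontracting.mono fun ω ⟨n, hn, K, hK⟩ => ⟨_, hK.tendsto_iterate_of_iterate hn x₀⟩)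
  have hVfix : ∀ᵐ ω ∂μ, T ω (V ω) = V ω := hV.mono fun ω hω =>
    isFixedPt_of_tendsto_iterate hω (hTc ω).continuousAt
  refine ⟨V, hVm, hVfix, fun W _ hWfix => ?_⟩
  filter_upwards [hcontracting, hVfix, hWfix] with ω ⟨n, _, K, hK⟩ hVω hWω
  exact hK.eq_of_isFixedPt_of_iterate hVω hWω
end

section
/- Random Nadler multivalued contraction theorem: let (E,d) be an (ε,λ)-complete random metric space with base (Ω,𝓕,P), α ∈ L⁰₊(𝓕) with α < 1 a.s., and T : E → CB_σ(E) a multivalued map satisfying H(T(x),T(y)) ≤ α·d(x,y) for all x,y ∈ E, where H is the random Hausdorff metric. Then there exists x ∈ E with x ∈ T(x). -/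
open MeasureTheory Filter Set

variable {Ω : Type*} [MeasurableSpace Ω]

/-- `b` is an a.e. upper bound of the family `S ⊆ L⁰(𝓕)`. -/
def IsAEUB {Ω : Type*} [MeasurableSpace Ω] (μ : MeasureTheory.Measure Ω)
    (S : Set (Ω → ℝ)) (b : Ω → ℝ) : Prop :=
  ∀ f ∈ S, ∀ᵐ ω ∂μ, f ω ≤ b ω

/-- `b` is the supremum `⋁S` of the family `S` in the a.e. order of `L⁰(𝓕)`. -/
def IsAELUB {Ω : Type*} [MeasurableSpace Ω] (μ : MeasureTheory.Measure Ω)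
    (S : Set (Ω → ℝ)) (b : Ω → ℝ) : Prop :=
  IsAEUB μ S b ∧ ∀ c : Ω → ℝ, IsAEUB μ S c → ∀ᵐ ω ∂μ, b ω ≤ c ω

/-- `b` is an a.e. lower bound of the family `S ⊆ L⁰(𝓕)`. -/
def IsAELB {Ω : Type*} [MeasurableSpace Ω] (μ : MeasureTheory.Measure Ω)
    (S : Set (Ω → ℝ)) (b : Ω → ℝ) : Prop :=
  ∀ f ∈ S, ∀ᵐ ω ∂μ, b ω ≤ f ω

/-- `b` is the infimum `⋀S` of the family `S` in the a.e. order of `L⁰(𝓕)`. -/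
def IsAEGLB {Ω : Type*} [MeasurableSpace Ω] (μ : MeasureTheory.Measure Ω)
    (S : Set (Ω → ℝ)) (b : Ω → ℝ) : Prop :=
  IsAELB μ S b ∧ ∀ c : Ω → ℝ, IsAELB μ S c → ∀ᵐ ω ∂μ, c ω ≤ b ω

/-- `G ∈ CB_σ(E)`: nonempty, a.s. bounded, σ-stable and `(ε,λ)`-closed. -/
def MemCBsigma {Ω : Type*} [MeasurableSpace Ω] (μ : MeasureTheory.Measure Ω) {E : Type*}
    (d : E → E → Ω → ℝ) (G : Set E) : Prop :=
  G.Nonempty ∧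
  (∃ b : Ω → ℝ, Measurable b ∧ ∀ u ∈ G, ∀ v ∈ G, ∀ᵐ ω ∂μ, d u v ω ≤ b ω) ∧
  SigmaStableSet μ d G ∧ ELClosure μ d G ⊆ G

section Helpers

variable {E : Type*} {μ : Measure Ω} {d : E → E → Ω → ℝ}

lemma concat_two (hσ : SigmaStableSet μ d G) {B : Set Ω} (hB : MeasurableSet B)
    {v1 v2 : E} (h1 : v1 ∈ G) (h2 : v2 ∈ G) :
    ∃ v, v ∈ G ∧ (∀ᵐ ω ∂μ, ω ∈ B → d v v1 ω = 0) ∧ (∀ᵐ ω ∂μ, ω ∉ B → d v v2 ω = 0) := by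
  set A : ℕ → Set Ω := fun n => if n = 0 then B else if n = 1 then Bᶜ else ∅ with hA
  have hpart : IsMeasPartition A := by
    refine ⟨?_, ?_, ?_⟩
    · intro n
      by_cases h0 : n = 0 <;> by_cases hone : n = 1 <;>
        simp [hA, h0, hone, hB, hB.compl]
    · intro i j hij
      simp only [Function.onFun, Set.disjoint_left]
      intro ω hi hj
      simp only [hA] at hi hj
      by_cases i0 : i = 0 <;> by_cases i1 : i = 1 <;> by_cases j0 : j = 0 <;>
        by_cases j1 : j = 1 <;> simp_all
    · ext ω
      simp only [Set.mem_iUnion, Set.mem_univ, iff_true]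
      by_cases hω : ω ∈ B
      · exact ⟨0, by simp [hA, hω]⟩
      · exact ⟨1, by simp [hA, hω]⟩
  obtain ⟨v, hvG, hcon⟩ := hσ A hpart (fun n => if n = 0 then v1 else v2)
    (by intro n; by_cases h : n = 0 <;> simp [h, h1, h2])
  refine ⟨v, hvG, ?_, ?_⟩
  · have := hcon 0
    simpa [hA] using this
  · have := hcon 1
    simpa [hA] using this

lemma directed_min (hd : IsRandomMetric μ d) {G : Set E} (hσ : SigmaStableSet μ d G)
    (u : E) {v1 v2 : E} (h1 : v1 ∈ G) (h2 : v2 ∈ G) :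
    ∃ v, v ∈ G ∧ ∀ᵐ ω ∂μ, d u v ω ≤ min (d u v1 ω) (d u v2 ω) := by
  obtain ⟨v, hvG, hcB, hcBc⟩ := concat_two hσ
    (measurableSet_le (hd.meas u v1) (hd.meas u v2)) h1 h2
  refine ⟨v, hvG, ?_⟩
  filter_upwards [hcB, hcBc, hd.triangle u v1 v, hd.triangle u v2 v,
    hd.symm v1 v, hd.symm v2 v] with ω c1 c2 t1 t2 s1 s2
  by_cases hω : d u v1 ω ≤ d u v2 ω
  · have h0 : d v v1 ω = 0 := c1 hω
    have : d u v ω ≤ d u v1 ω := by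
      have := t1; rw [s1, h0] at this; linarith
    exact le_min this (this.trans hω)
  · have h0 : d v v2 ω = 0 := c2 hω
    have : d u v ω ≤ d u v2 ω := by
      have := t2; rw [s2, h0] at this; linarith
    exact le_min (this.trans (le_of_not_ge hω)) this

end Helpers
section Selection

open Topology

variable {E : Type*} {μ : Measure Ω} {d : E → E → Ω → ℝ}

lemma key_selection [IsProbabilityMeasure μ] (hd : IsRandomMetric μ d) {G : Set E}
    (hne : G.Nonempty) (hσ : SigmaStableSet μ d G) (u : E) {ε : ℝ} (hε : 0 < ε) :
    ∃ g : Ω → ℝ, IsAEGLB μ {h | ∃ v ∈ G, h = d u v} g ∧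
      ∃ v, v ∈ G ∧ ∀ᵐ ω ∂μ, d u v ω ≤ g ω + ε := by
  classical
  obtain ⟨v0, hv0⟩ := hne
  -- the bounded strictly monotone transform
  set φ : ℝ → ℝ := fun t => 1 - Real.exp (-t) with hφ
  have hφmono : Monotone φ := by
    intro a b hab
    simp only [hφ]
    have := Real.exp_le_exp.2 (neg_le_neg hab)
    linarith
  have hφstrict : StrictMono φ := by
    intro a b hab
    simp only [hφ]
    have := Real.exp_lt_exp.2 (neg_lt_neg hab)
    linarith
  have hφcont : Continuous φ := continuous_const.sub (Real.continuous_exp.comp continuous_neg)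
  have hφbd : ∀ t : ℝ, 0 ≤ t → ‖φ t‖ ≤ 1 := by
    intro t ht
    rw [Real.norm_eq_abs, abs_le]
    constructor
    · have h1 : Real.exp (-t) ≤ 1 := Real.exp_le_one_iff.2 (by linarith)
      simp only [hφ]; linarith
    · have h2 : 0 < Real.exp (-t) := Real.exp_pos _
      simp only [hφ]; linarith
  set J : (Ω → ℝ) → ℝ := fun f => ∫ ω, φ (f ω) ∂μ with hJ
  have Jint : ∀ f : Ω → ℝ, Measurable f → (∀ᵐ ω ∂μ, 0 ≤ f ω) →
      Integrable (fun ω => φ (f ω)) μ := by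
    intro f hf h0
    refine Integrable.mono' (integrable_const 1)
      ((hφcont.measurable.comp hf).aestronglyMeasurable) ?_
    filter_upwards [h0] with ω h
    exact hφbd _ h
  have Jmono : ∀ f h : Ω → ℝ, Integrable (fun ω => φ (f ω)) μ →
      Integrable (fun ω => φ (h ω)) μ → (∀ᵐ ω ∂μ, f ω ≤ h ω) → J f ≤ J h :=
    fun f h hif hih hle => integral_mono_ae hif hih (hle.mono fun ω h => hφmono h)
  -- the infimum of the integrals
  have hSne : Set.Nonempty {r | ∃ v ∈ G, r = J (d u v)} := ⟨J (d u v0), v0, hv0, rfl⟩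
  have hSbdd : BddBelow {r | ∃ v ∈ G, r = J (d u v)} := by
    refine ⟨-1, ?_⟩
    rintro r ⟨v, hv, rfl⟩
    have hb : ‖J (d u v)‖ ≤ 1 * (μ Set.univ).toReal := by
      refine norm_integral_le_of_norm_le_const ?_
      filter_upwards [hd.nonneg u v] with ω h
      exact hφbd _ h
    simp only [measure_univ, ENNReal.toReal_one, one_mul, Real.norm_eq_abs] at hb
    linarith [abs_le.1 hb]
  set I : ℝ := sInf {r | ∃ v ∈ G, r = J (d u v)} with hI
  have hfk : ∀ k : ℕ, ∃ v, v ∈ G ∧ J (d u v) < I + 1/(k+1) := by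
    intro k
    have hlt : I < I + 1/(k+1) := lt_add_of_pos_right _ (by positivity)
    obtain ⟨r, ⟨v, hv, rfl⟩, hr⟩ := exists_lt_of_csInf_lt hSne (show sInf _ < _ from hI ▸ hlt)
    exact ⟨v, hv, hr⟩
  have dir' : ∀ a b : E, ∃ v : E, a ∈ G → b ∈ G →
      v ∈ G ∧ ∀ᵐ ω ∂μ, d u v ω ≤ min (d u a ω) (d u b ω) := by
    intro a b
    by_cases ha : a ∈ G
    · by_cases hb : b ∈ G
      · obtain ⟨v, hvG, hv⟩ := directed_min hd hσ u ha hb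
        exact ⟨v, fun _ _ => ⟨hvG, hv⟩⟩
      · exact ⟨a, fun _ h => absurd h hb⟩
    · exact ⟨a, fun h => absurd h ha⟩
  let fk : ℕ → E := fun k => (hfk k).choose
  have hfkG : ∀ k, fk k ∈ G := fun k => (hfk k).choose_spec.1
  have hfkJ : ∀ k, J (d u (fk k)) < I + 1/(k+1) := fun k => (hfk k).choose_spec.2
  let w : ℕ → E := fun k => Nat.rec (fk 0) (fun k wk => (dir' wk (fk (k+1))).choose) k
  have hw0 : w 0 = fk 0 := rfl
  have hwsucc : ∀ k, w (k+1) = (dir' (w k) (fk (k+1))).choose := fun _ => rfl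
  have hwG : ∀ k, w k ∈ G := by
    intro k
    induction k with
    | zero => exact hfkG 0
    | succ k ih =>
      rw [hwsucc k]
      exact ((dir' (w k) (fk (k+1))).choose_spec ih (hfkG (k+1))).1
  have hwmin : ∀ k, ∀ᵐ ω ∂μ, d u (w (k+1)) ω ≤ min (d u (w k) ω) (d u (fk (k+1)) ω) := by
    intro k
    have := ((dir' (w k) (fk (k+1))).choose_spec (hwG k) (hfkG (k+1))).2
    rwa [← hwsucc k] at this
  have hJwmem : ∀ k, I ≤ J (d u (w k)) := fun k => hI ▸ csInf_le hSbdd ⟨w k, hwG k, rfl⟩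
  have hJwlt : ∀ k, J (d u (w k)) < I + 1/(k+1) := by
    intro k
    cases k with
    | zero => rw [hw0]; exact hfkJ 0
    | succ k =>
      have hle : ∀ᵐ ω ∂μ, d u (w (k+1)) ω ≤ d u (fk (k+1)) ω :=
        (hwmin k).mono fun ω h => h.trans (min_le_right _ _)
      exact lt_of_le_of_lt
        (Jmono _ _ (Jint _ (hd.meas _ _) (hd.nonneg _ _))
          (Jint _ (hd.meas _ _) (hd.nonneg _ _)) hle) (hfkJ (k+1))
  -- the candidate infimum function
  set g : Ω → ℝ := fun ω => (⨅ k, ENNReal.ofReal (d u (w k) ω)).toReal with hg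
  have hgmeas : Measurable g :=
    (Measurable.iInf (fun k => (hd.meas u (w k)).ennreal_ofReal)).ennreal_toReal
  have hgnn : ∀ ω, 0 ≤ g ω := fun ω => ENNReal.toReal_nonneg
  have hGood : ∀ᵐ ω ∂μ, (∀ k, 0 ≤ d u (w k) ω) ∧ (∀ k, d u (w (k+1)) ω ≤ d u (w k) ω) :=
    (ae_all_iff.2 fun k => hd.nonneg u (w k)).and
      (ae_all_iff.2 fun k => (hwmin k).mono fun ω h => h.trans (min_le_left _ _))
  have hkey : ∀ ω, (∀ k, 0 ≤ d u (w k) ω) → (∀ k, d u (w (k+1)) ω ≤ d u (w k) ω) →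
      Tendsto (fun k => d u (w k) ω) atTop (𝓝 (g ω)) ∧ (∀ k, g ω ≤ d u (w k) ω) := by
    intro ω h0 hmono
    have hanti : Antitone fun k => ENNReal.ofReal (d u (w k) ω) :=
      antitone_nat_of_succ_le fun k => ENNReal.ofReal_le_ofReal (hmono k)
    have htend : Tendsto (fun k => ENNReal.ofReal (d u (w k) ω)) atTop
        (𝓝 (⨅ k, ENNReal.ofReal (d u (w k) ω))) := tendsto_atTop_iInf hanti
    have hnetop : (⨅ k, ENNReal.ofReal (d u (w k) ω)) ≠ ⊤ :=
      (lt_of_le_of_lt (iInf_le (fun k => ENNReal.ofReal (d u (w k) ω)) 0) ENNReal.ofReal_lt_top).ne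
    constructor
    · have h2 : (fun k => (ENNReal.ofReal (d u (w k) ω)).toReal)
          = fun k => d u (w k) ω := funext fun k => ENNReal.toReal_ofReal (h0 k)
      have h3 := (ENNReal.tendsto_toReal hnetop).comp htend
      rw [show ((fun x : ENNReal => x.toReal) ∘ fun k => ENNReal.ofReal (d u (w k) ω))
        = fun k => (ENNReal.ofReal (d u (w k) ω)).toReal from rfl, h2] at h3
      exact h3
    · intro k
      calc g ω ≤ (ENNReal.ofReal (d u (w k) ω)).toReal :=
            ENNReal.toReal_mono ENNReal.ofReal_ne_top (iInf_le (fun j => ENNReal.ofReal (d u (w j) ω)) k)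
        _ = d u (w k) ω := ENNReal.toReal_ofReal (h0 k)
  -- J g = I
  have hJconv : Tendsto (fun k => J (d u (w k))) atTop (𝓝 (J g)) := by
    refine tendsto_integral_of_dominated_convergence (fun _ => (1:ℝ))
      (fun k => (hφcont.measurable.comp (hd.meas u (w k))).aestronglyMeasurable)
      (integrable_const 1) (fun k => ?_) ?_
    · filter_upwards [hd.nonneg u (w k)] with ω h
      exact hφbd _ h
    · filter_upwards [hGood] with ω hω
      exact (hφcont.tendsto _).comp ((hkey ω hω.1 hω.2).1)
  have hJconvI : Tendsto (fun k => J (d u (w k))) atTop (𝓝 I) := by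
    have h1 : Tendsto (fun k : ℕ => I + 1/(k+1 : ℝ)) atTop (𝓝 (I + 0)) :=
      tendsto_const_nhds.add tendsto_one_div_add_atTop_nhds_zero_nat
    rw [add_zero] at h1
    exact tendsto_of_tendsto_of_tendsto_of_le_of_le tendsto_const_nhds h1
      hJwmem (fun k => (hJwlt k).le)
  have hJg : J g = I := tendsto_nhds_unique hJconv hJconvI
  -- g is an a.e. lower bound
  have hlb : IsAELB μ {h | ∃ v ∈ G, h = d u v} g := by
    rintro f ⟨v, hvG, rfl⟩
    have hdirk : ∀ k : ℕ, ∃ z : E, z ∈ G ∧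
        ∀ᵐ ω ∂μ, d u z ω ≤ min (d u (w k) ω) (d u v ω) :=
      fun k => directed_min hd hσ u (hwG k) hvG
    have hminint : ∀ k, Integrable (fun ω => φ (min (d u (w k) ω) (d u v ω))) μ := by
      intro k
      refine Jint _ ((hd.meas u (w k)).min (hd.meas u v)) ?_
      filter_upwards [hd.nonneg u (w k), hd.nonneg u v] with ω h1 h2
      exact le_min h1 h2
    have hIk : ∀ k, I ≤ ∫ ω, φ (min (d u (w k) ω) (d u v ω)) ∂μ := by
      intro k
      obtain ⟨z, hzG, hz⟩ := hdirk k
      calc I ≤ J (d u z) := hI ▸ csInf_le hSbdd ⟨z, hzG, rfl⟩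
        _ ≤ ∫ ω, φ (min (d u (w k) ω) (d u v ω)) ∂μ :=
          Jmono _ _ (Jint _ (hd.meas _ _) (hd.nonneg _ _)) (hminint k) hz
    have hgvint : Integrable (fun ω => φ (min (g ω) (d u v ω))) μ := by
      refine Jint _ (hgmeas.min (hd.meas u v)) ?_
      filter_upwards [hd.nonneg u v] with ω h2
      exact le_min (hgnn ω) h2
    have hlim : Tendsto (fun k => ∫ ω, φ (min (d u (w k) ω) (d u v ω)) ∂μ) atTop
        (𝓝 (∫ ω, φ (min (g ω) (d u v ω)) ∂μ)) := by
      refine tendsto_integral_of_dominated_convergence (fun _ => (1:ℝ))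
        (fun k => (hφcont.measurable.comp
          ((hd.meas u (w k)).min (hd.meas u v))).aestronglyMeasurable)
        (integrable_const 1) (fun k => ?_) ?_
      · filter_upwards [hd.nonneg u (w k), hd.nonneg u v] with ω h1 h2
        exact hφbd _ (le_min h1 h2)
      · filter_upwards [hGood] with ω hω
        exact (hφcont.tendsto _).comp (((hkey ω hω.1 hω.2).1).min tendsto_const_nhds)
    have hIle : I ≤ ∫ ω, φ (min (g ω) (d u v ω)) ∂μ := ge_of_tendsto hlim
      (Filter.Eventually.of_forall hIk)
    have hle2 : ∫ ω, φ (min (g ω) (d u v ω)) ∂μ ≤ J g := by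
      refine Jmono _ _ hgvint (Jint _ hgmeas (Filter.Eventually.of_forall hgnn)) ?_
      exact Filter.Eventually.of_forall fun ω => min_le_left _ _
    have heq : ∫ ω, φ (min (g ω) (d u v ω)) ∂μ = J g := le_antisymm hle2 (hJg ▸ hIle)
    have hint0 : ∫ ω, (φ (g ω) - φ (min (g ω) (d u v ω))) ∂μ = 0 := by
      rw [integral_sub (Jint _ hgmeas (Filter.Eventually.of_forall hgnn)) hgvint]
      rw [show ∫ ω, φ (g ω) ∂μ = J g from rfl, heq, sub_self]
    have hnn : 0 ≤ᵐ[μ] fun ω => φ (g ω) - φ (min (g ω) (d u v ω)) :=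
      Filter.Eventually.of_forall fun ω => sub_nonneg.2 (hφmono (min_le_left _ _))
    have hzero := (integral_eq_zero_iff_of_nonneg_ae hnn
      ((Jint _ hgmeas (Filter.Eventually.of_forall hgnn)).sub hgvint)).1 hint0
    filter_upwards [hzero] with ω h
    have h' : φ (min (g ω) (d u v ω)) = φ (g ω) := (sub_eq_zero.1 h).symm
    have := hφstrict.injective h'
    exact min_eq_left_iff.1 this
  -- g is the greatest lower bound
  have hglb : IsAEGLB μ {h | ∃ v ∈ G, h = d u v} g := by
    refine ⟨hlb, ?_⟩
    intro c hc
    have hck : ∀ k, ∀ᵐ ω ∂μ, c ω ≤ d u (w k) ω := fun k => hc _ ⟨w k, hwG k, rfl⟩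
    filter_upwards [ae_all_iff.2 hck, hGood] with ω hcω hω
    exact ge_of_tendsto ((hkey ω hω.1 hω.2).1) (Filter.Eventually.of_forall hcω)
  -- selection of an ε-approximate nearest point via σ-stability
  set C : ℕ → Set Ω := fun k => {ω | d u (w k) ω < g ω + ε} with hC
  have hCmeas : ∀ k, MeasurableSet (C k) :=
    fun k => measurableSet_lt (hd.meas u (w k)) (hgmeas.add measurable_const)
  set N : Set Ω := (⋃ k, C k)ᶜ with hNdef
  have hcover : ∀ᵐ ω ∂μ, ω ∈ ⋃ k, C k := by
    filter_upwards [hGood] with ω hω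
    have htd := (hkey ω hω.1 hω.2).1
    have hev : ∀ᶠ k in atTop, d u (w k) ω < g ω + ε :=
      htd.eventually_lt_const (by linarith [hgnn ω] : g ω < g ω + ε)
    obtain ⟨k, hk⟩ := hev.exists
    exact Set.mem_iUnion.2 ⟨k, hk⟩
  set A : ℕ → Set Ω := fun k => disjointed C k ∪ (if k = 0 then N else ∅) with hA
  have hND : ∀ k, Disjoint N (disjointed C k) := fun k =>
    (disjoint_compl_left (a := ⋃ k, C k)).mono_right
      ((disjointed_subset C k).trans (Set.subset_iUnion C k))
  have hpart : IsMeasPartition A := by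
    refine ⟨?_, ?_, ?_⟩
    · intro k
      refine (MeasurableSet.disjointed hCmeas k).union ?_
      split_ifs
      · exact (MeasurableSet.iUnion hCmeas).compl
      · exact MeasurableSet.empty
    · intro i j hij
      simp only [Function.onFun, hA]
      apply Disjoint.union_left
      · apply Disjoint.union_right
        · exact disjoint_disjointed C hij
        · split_ifs
          · exact (hND i).symm
          · exact Set.disjoint_empty _
      · apply Disjoint.union_right
        · split_ifs with hi
          · exact hND j
          · exact Set.empty_disjoint _
        · split_ifs with hi hj
          · exact absurd (hi.trans hj.symm) hij
          · exact Set.disjoint_empty _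
          · exact Set.empty_disjoint _
          · exact Set.empty_disjoint _
    · ext ω
      simp only [hA, Set.mem_iUnion, Set.mem_univ, iff_true, Set.mem_union]
      by_cases hω : ω ∈ ⋃ k, C k
      · rw [← iUnion_disjointed] at hω
        obtain ⟨k, hk⟩ := Set.mem_iUnion.1 hω
        exact ⟨k, Or.inl hk⟩
      · exact ⟨0, Or.inr (by simp only [if_pos rfl, hNdef, Set.mem_compl_iff]; exact hω)⟩
  obtain ⟨v, hvG2, hcon⟩ := hσ A hpart w hwG
  refine ⟨g, hglb, v, hvG2, ?_⟩
  filter_upwards [hcover, ae_all_iff.2 hcon,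
    ae_all_iff.2 (fun k => hd.triangle u (w k) v),
    ae_all_iff.2 (fun k => hd.symm (w k) v)] with ω hcov hconω htri hsym
  rw [← iUnion_disjointed] at hcov
  obtain ⟨k, hk⟩ := Set.mem_iUnion.1 hcov
  have hAk : ω ∈ A k := by
    simp only [hA, Set.mem_union]
    exact Or.inl hk
  have h0 : d v (w k) ω = 0 := hconω k hAk
  have hCk : ω ∈ C k := disjointed_subset C k hk
  have htr : d u v ω ≤ d u (w k) ω + d (w k) v ω := htri k
  have hs : d (w k) v ω = d v (w k) ω := hsym k
  have hCk' : d u (w k) ω < g ω + ε := hCk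
  linarith [htr, hs.symm ▸ h0]

end Selection
section MainAux

open Topology

lemma aux_summable {q : ℝ} (hq0 : 0 ≤ q) (hq1 : q < 1) (b : ℕ → ℝ) (hb0 : ∀ n, 0 ≤ b n)
    (hrec : ∀ n, b (n+1) ≤ q * b n + (2⁻¹:ℝ)^n) : Summable b := by
  set c := max q 2⁻¹ with hc
  have hc0 : (0:ℝ) ≤ c := le_max_of_le_right (by norm_num)
  have hc1 : c < 1 := max_lt hq1 (by norm_num)
  have hhalf : (2⁻¹:ℝ) ≤ c := le_max_right _ _
  have hqc : q ≤ c := le_max_left _ _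
  have hbd : ∀ n : ℕ, b (n+1) ≤ c^n * (b 0 + n + 1) := by
    intro n
    induction n with
    | zero =>
      have h := hrec 0
      simp only [pow_zero, mul_one] at h ⊢
      nlinarith [hb0 0]
    | succ n ih =>
      have h1 := hrec (n+1)
      have hbn1 : 0 ≤ b (n+1) := hb0 _
      have h2 : q * b (n+1) ≤ c * (c^n * (b 0 + n + 1)) := by
        have := mul_le_mul hqc ih hbn1 hc0
        linarith
      have h3 : (2⁻¹:ℝ)^(n+1) ≤ c^(n+1) := pow_le_pow_left₀ (by norm_num) hhalf _
      have h4 : b (n+2) ≤ c * (c^n * (b 0 + n + 1)) + c^(n+1) := by linarith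
      have heq : c * (c^n * (b 0 + (n:ℝ) + 1)) + c^(n+1)
          = c^(n+1) * (b 0 + ((n+1:ℕ):ℝ) + 1) := by push_cast; ring
      linarith
  have hmaj : Summable (fun n : ℕ => c^n * (b 0 + n + 1)) := by
    have h1 : Summable (fun n : ℕ => (b 0 + 1) * c^n) :=
      (summable_geometric_of_lt_one hc0 hc1).mul_left _
    have h2 : Summable (fun n : ℕ => (n:ℝ) * c^n) := by
      have := summable_pow_mul_geometric_of_norm_lt_one 1
        (r := c) (by rwa [Real.norm_eq_abs, abs_of_nonneg hc0])
      simpa using this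
    have h3 := h1.add h2
    refine h3.congr fun n => ?_
    push_cast; ring
  have hsucc : Summable (fun n => b (n+1)) :=
    Summable.of_nonneg_of_le (fun n => hb0 _) hbd hmaj
  exact (summable_nat_add_iff 1).1 hsucc

end MainAux
open Topology in
/-- random Nadler multivalued contraction theorem. The hypothesis `hH`
says exactly that the random Hausdorff distance satisfies `H(T(x),T(y)) ≤ α·d(x,y)`:
both `⋁_{u∈T(x)} d(u,T(y))` and `⋁_{v∈T(y)} d(v,T(x))` are `≤ α·d(x,y)` a.s., where
`d(u,G) = ⋀{d(u,v) : v ∈ G}` is expressed through a.e. greatest lower bounds. -/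
theorem random_nadler_fixed_point {E : Type*} [Nonempty E]
    (μ : Measure Ω) [IsProbabilityMeasure μ]
    (d : E → E → Ω → ℝ) (hd : IsRandomMetric μ d) (hcomp : ELComplete μ d)
    (α : Ω → ℝ) (hαm : Measurable α)
    (hα0 : ∀ᵐ ω ∂μ, 0 ≤ α ω) (hα1 : ∀ᵐ ω ∂μ, α ω < 1)
    (T : E → Set E) (hTcb : ∀ x, MemCBsigma μ d (T x))
    (hH : ∀ x y : E,
      (∀ u ∈ T x, ∀ g : Ω → ℝ, IsAEGLB μ {h | ∃ v ∈ T y, h = d u v} g →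
        ∀ᵐ ω ∂μ, g ω ≤ α ω * d x y ω) ∧
      (∀ v ∈ T y, ∀ g : Ω → ℝ, IsAEGLB μ {h | ∃ u ∈ T x, h = d u v} g →
        ∀ᵐ ω ∂μ, g ω ≤ α ω * d x y ω)) :
    ∃ x : E, x ∈ T x := by
  classical
  obtain ⟨x0⟩ := ‹Nonempty E›
  obtain ⟨x1, hx1⟩ := (hTcb x0).1
  -- step of the iteration: an `2⁻¹^n`-approximate nearest point in `T b`
  have step : ∀ (n : ℕ) (a b : E), ∃ v : E, v ∈ T b ∧
      (b ∈ T a → ∀ᵐ ω ∂μ, d b v ω ≤ α ω * d a b ω + (2⁻¹:ℝ)^n) := by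
    intro n a b
    obtain ⟨g, hglb, v, hvT, hv⟩ := key_selection hd (hTcb b).1 (hTcb b).2.2.1 b
      (show (0:ℝ) < 2⁻¹^n by positivity)
    refine ⟨v, hvT, fun hb => ?_⟩
    have hgle : ∀ᵐ ω ∂μ, g ω ≤ α ω * d a b ω := (hH a b).1 b hb g hglb
    filter_upwards [hv, hgle] with ω h1 h2
    linarith
  -- the iteration
  let F : ℕ → E × E := fun n => Nat.rec (x0, x1) (fun n p => (p.2, (step n p.1 p.2).choose)) n
  have hFsucc : ∀ n, F (n+1) = ((F n).2, (step n (F n).1 (F n).2).choose) := fun _ => rfl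
  have hmem : ∀ n, (F n).2 ∈ T (F n).1 := by
    intro n
    induction n with
    | zero => exact hx1
    | succ n ih =>
      rw [hFsucc n]
      exact (step n (F n).1 (F n).2).choose_spec.1
  set x : ℕ → E := fun n => (F n).1 with hxdef
  have hx2 : ∀ n, (F n).2 = x (n+1) := fun n => rfl
  have hmem' : ∀ n, x (n+1) ∈ T (x n) := fun n => hmem n
  set b : ℕ → Ω → ℝ := fun n ω => d (x n) (x (n+1)) ω with hbdef
  have hrec : ∀ n, ∀ᵐ ω ∂μ, b (n+1) ω ≤ α ω * b n ω + (2⁻¹:ℝ)^n := by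
    intro n
    have h := (step n (F n).1 (F n).2).choose_spec.2 (hmem n)
    exact h
  -- almost-sure good event
  have hGood : ∀ᵐ ω ∂μ, (0 ≤ α ω) ∧ (α ω < 1) ∧ (∀ n, 0 ≤ b n ω) ∧
      (∀ n, b (n+1) ω ≤ α ω * b n ω + (2⁻¹:ℝ)^n) ∧
      (∀ i j k, d (x i) (x k) ω ≤ d (x i) (x j) ω + d (x j) (x k) ω) ∧
      (∀ i j, d (x i) (x j) ω = d (x j) (x i) ω) ∧
      (∀ i, d (x i) (x i) ω = 0) := by
    refine hα0.and (hα1.and ((ae_all_iff.2 fun n => hd.nonneg (x n) (x (n+1))).and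
      ((ae_all_iff.2 hrec).and
      ((ae_all_iff.2 fun i => ae_all_iff.2 fun j => ae_all_iff.2 fun k =>
        hd.triangle (x i) (x j) (x k)).and
      ((ae_all_iff.2 fun i => ae_all_iff.2 fun j => hd.symm (x i) (x j)).and
      (ae_all_iff.2 fun i => ((hd.eq_zero_iff (x i) (x i)).2 rfl).mono
        fun ω h => by simpa using h))))))
  -- pointwise chain bound
  have chain : ∀ ω, (∀ i j k, d (x i) (x k) ω ≤ d (x i) (x j) ω + d (x j) (x k) ω) →
      (∀ i, d (x i) (x i) ω = 0) → ∀ m n, m ≤ n →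
      d (x m) (x n) ω ≤ ∑ k ∈ Finset.Ico m n, b k ω := by
    intro ω htri hzero m n hmn
    induction n with
    | zero =>
      have : m = 0 := Nat.le_zero.1 hmn
      subst this
      simp [hzero]
    | succ n ih =>
      rcases Nat.lt_or_ge m (n+1) with h | h
      · have hmn' : m ≤ n := Nat.lt_succ_iff.1 h
        have h1 := ih hmn'
        have h2 := htri m n (n+1)
        rw [Finset.sum_Ico_succ_top hmn']
        have hb : b n ω = d (x n) (x (n+1)) ω := rfl
        linarith
      · have : m = n+1 := le_antisymm hmn h
        subst this
        simp only [Finset.Ico_self, Finset.sum_empty]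
        exact le_of_eq (hzero (n+1))
  -- the sequence is (ε,λ)-Cauchy
  have hCauchy : ELCauchy μ d x := by
    intro ε hε l hl0 hl1
    set Aset : ℕ → Set Ω :=
      fun N => {ω | ∀ m, N ≤ m → ∀ n, N ≤ n → d (x m) (x n) ω < ε} with hAset
    have hAmeas : ∀ N, MeasurableSet (Aset N) := by
      intro N
      have : Aset N = ⋂ m, ⋂ (_ : N ≤ m), ⋂ n, ⋂ (_ : N ≤ n), {ω | d (x m) (x n) ω < ε} := by
        ext ω
        simp [hAset]
      rw [this]
      exact MeasurableSet.iInter fun m => MeasurableSet.iInter fun _ =>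
        MeasurableSet.iInter fun n => MeasurableSet.iInter fun _ =>
          measurableSet_lt (hd.meas _ _) measurable_const
    have hAmono : Monotone Aset := by
      intro N N' hNN' ω hω m hm n hn
      exact hω m (hNN'.trans hm) n (hNN'.trans hn)
    have hAcover : ∀ᵐ ω ∂μ, ω ∈ ⋃ N, Aset N := by
      filter_upwards [hGood] with ω hω
      obtain ⟨ha0, ha1, hb0, hbrec, htri, hsym, hzero⟩ := hω
      have hsum : Summable (fun n => b n ω) := aux_summable ha0 ha1 _ hb0 hbrec
      have htail : Tendsto (fun N => ∑' k, b (k + N) ω) atTop (𝓝 0) :=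
        tendsto_sum_nat_add (fun n => b n ω)
      obtain ⟨N, hN⟩ := (htail.eventually_lt_const hε).exists
      refine Set.mem_iUnion.2 ⟨N, ?_⟩
      have key : ∀ m n, N ≤ m → m ≤ n → d (x m) (x n) ω < ε := by
        intro m n hNm hmn
        have hsumN : Summable (fun k => b (k + N) ω) := (summable_nat_add_iff N).2 hsum
        calc d (x m) (x n) ω ≤ ∑ k ∈ Finset.Ico m n, b k ω := chain ω htri hzero m n hmn
          _ ≤ ∑ k ∈ Finset.Ico N n, b k ω :=
            Finset.sum_le_sum_of_subset_of_nonneg (Finset.Ico_subset_Ico hNm le_rfl)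
              (fun i _ _ => hb0 i)
          _ = ∑ k ∈ Finset.range (n - N), b (k + N) ω := by
            rw [Finset.sum_Ico_eq_sum_range]
            exact Finset.sum_congr rfl fun i _ => by rw [add_comm]
          _ ≤ ∑' k, b (k + N) ω :=
            Summable.sum_le_tsum _ (fun i _ => hb0 _) hsumN
          _ < ε := hN
      intro m hm n hn
      rcases le_total m n with h | h
      · exact key m n hm h
      · rw [hsym m n]
        exact key n m hn h
    have hUnion : ENNReal.ofReal (1 - l) < μ (⋃ N, Aset N) := by
      have h2 : (1:ENNReal) ≤ μ (⋃ N, Aset N) := by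
        have hle : (Set.univ : Set Ω) ≤ᵐ[μ] ⋃ N, Aset N :=
          hAcover.mono fun ω h _ => h
        have := measure_mono_ae hle
        simpa [measure_univ] using this
      exact lt_of_lt_of_le (ENNReal.ofReal_lt_one.2 (by linarith)) h2
    have htendμ : Tendsto (fun N => μ (Aset N)) atTop (𝓝 (μ (⋃ N, Aset N))) :=
      tendsto_measure_iUnion_atTop hAmono
    obtain ⟨N, hN⟩ := (htendμ.eventually_const_lt hUnion).exists
    refine ⟨N, fun m hm n hn => ?_⟩
    refine lt_of_lt_of_le hN (measure_mono ?_)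
    intro ω hω
    exact hω m hm n hn
  -- limit point
  obtain ⟨xstar, hxstar⟩ := hcomp x hCauchy
  refine ⟨xstar, (hTcb xstar).2.2.2 ?_⟩
  intro ε hε l hl0 hl1
  obtain ⟨N0, hN0⟩ := hxstar (ε/4) (by linarith) (l/2) (by linarith) (by linarith)
  obtain ⟨g, hglb, v, hvT, hv⟩ := key_selection hd (hTcb xstar).1 (hTcb xstar).2.2.1
    (x (N0+1)) (show (0:ℝ) < ε/4 by linarith)
  have hgle : ∀ᵐ ω ∂μ, g ω ≤ α ω * d (x N0) xstar ω :=
    (hH (x N0) xstar).1 (x (N0+1)) (hmem' N0) g hglb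
  refine ⟨v, hvT, ?_⟩
  set S1 : Set Ω := {ω | d (x N0) xstar ω < ε/4} with hS1def
  set S2 : Set Ω := {ω | d (x (N0+1)) xstar ω < ε/4} with hS2def
  have hS1meas : MeasurableSet S1 := measurableSet_lt (hd.meas _ _) measurable_const
  have hS2meas : MeasurableSet S2 := measurableSet_lt (hd.meas _ _) measurable_const
  have hm1 : ENNReal.ofReal (1 - l/2) < μ S1 := hN0 N0 le_rfl
  have hm2 : ENNReal.ofReal (1 - l/2) < μ S2 := hN0 (N0+1) (Nat.le_succ _)
  have hfin : ∀ S : Set Ω, μ S ≠ ⊤ := fun S => (measure_lt_top μ S).ne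
  have hkey : ENNReal.ofReal (1 - l) < μ (S1 ∩ S2) := by
    have e1 : 1 - l/2 < (μ S1).toReal :=
      (ENNReal.ofReal_lt_iff_lt_toReal (by linarith) (hfin _)).1 hm1
    have e2 : 1 - l/2 < (μ S2).toReal :=
      (ENNReal.ofReal_lt_iff_lt_toReal (by linarith) (hfin _)).1 hm2
    have hadd : (μ (S1 ∪ S2)).toReal + (μ (S1 ∩ S2)).toReal
        = (μ S1).toReal + (μ S2).toReal := by
      rw [← ENNReal.toReal_add (hfin _) (hfin _), ← ENNReal.toReal_add (hfin _) (hfin _),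
        measure_union_add_inter S1 hS2meas]
    have hu : (μ (S1 ∪ S2)).toReal ≤ 1 := by
      have h := prob_le_one (μ := μ) (s := S1 ∪ S2)
      have := ENNReal.toReal_mono (by simp) h
      simpa using this
    have : 1 - l < (μ (S1 ∩ S2)).toReal := by linarith
    exact (ENNReal.ofReal_lt_iff_lt_toReal (by linarith) (hfin _)).2 this
  refine lt_of_lt_of_le hkey (measure_mono_ae ?_)
  filter_upwards [hd.triangle xstar (x (N0+1)) v, hd.symm xstar (x (N0+1)), hv, hgle,
    hα0, hα1, hd.nonneg (x N0) xstar] with ω htri hsym hvω hgω ha0 ha1 hnn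
  intro hωmem
  obtain ⟨h1, h2⟩ := hωmem
  have h1' : d (x N0) xstar ω < ε/4 := h1
  have h2' : d (x (N0+1)) xstar ω < ε/4 := h2
  have hα' : α ω * d (x N0) xstar ω ≤ d (x N0) xstar ω := by nlinarith
  show d xstar v ω < ε
  calc d xstar v ω ≤ d xstar (x (N0+1)) ω + d (x (N0+1)) v ω := htri
    _ = d (x (N0+1)) xstar ω + d (x (N0+1)) v ω := by rw [hsym]
    _ < ε := by linarith
end
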